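/- arXiv:1912.09153 — 7 statements merged into one kernel-verified Lean document; each statement's English description precedes it below -/
import Mathlib

section
/- Let Ω ⊂ ℝ² be open and bounded, let λ > 0 and ε > 0 be constants, let b : cl(Ω) → ℝ² be continuous, G : cl(Ω) × ℝ² → ℝ continuous, and g : ∂Ω → ℝ continuous. Then every viscosity solution v of (HJ^ε) and (BC^ε) satisfies sup_{cl(Ω)} |v| ≤ max{ λ⁻¹ · max_{x ∈ cl(Ω)} |G(x, 0)|, max_{∂Ω} |g| }. In particular, the union over all ε > 0 of the sets of viscosity solutions of (HJ^ε) and (BC^ε) is uniformly bounded on cl(Ω). -/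
open Filter Topology Set Metric Bornology

/-!
Test both viscosity inequalities with `φ ≡ 0`, so that the drift term `ε⁻¹ b · Dφ` vanishes and
nothing depends on `ε`. The upper envelope `v*` is upper semicontinuous on the compact set `cl Ω`,
hence attains its maximum at some `z`, where `φ ≡ 0` touches from above: either
`λ v*(z) + G(z, 0) ≤ 0` or (only for `z ∈ ∂Ω`) `v*(z) ≤ g(z)`. As `v ≤ v*`, this bounds `v` from
above; the minimum of `v_*` and the supersolution inequalities bound it from below.
-/

noncomputable section

/-- The plane `ℝ²` as a Euclidean space. -/
abbrev E2 : Type := EuclideanSpace ℝ (Fin 2)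

/-- Upper semicontinuous envelope of `u` relative to the set `s`. -/
def uscEnv (s : Set E2) (u : E2 → ℝ) (x : E2) : ℝ := limsup u (nhdsWithin x s)

/-- Lower semicontinuous envelope of `u` relative to the set `s`. -/
def lscEnv (s : Set E2) (u : E2 → ℝ) (x : E2) : ℝ := liminf u (nhdsWithin x s)

/-- `u` is a viscosity subsolution of (HJ^ε):
`λ u − ε⁻¹ b · Du + G(x, Du) = 0` in `Ω`. -/
def IsSubHJ (Ω : Set E2) (lam ep : ℝ) (b : E2 → E2) (G : E2 → E2 → ℝ) (u : E2 → ℝ) : Prop :=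
  ∀ φ : E2 → ℝ, ContDiff ℝ 1 φ → ∀ z ∈ Ω,
    IsLocalMaxOn (fun x => uscEnv (closure Ω) u x - φ x) Ω z →
    lam * uscEnv (closure Ω) u z - ep⁻¹ * (inner ℝ (b z) (gradient φ z) : ℝ)
      + G z (gradient φ z) ≤ 0

/-- `u` is a viscosity supersolution of (HJ^ε) in `Ω`. -/
def IsSupHJ (Ω : Set E2) (lam ep : ℝ) (b : E2 → E2) (G : E2 → E2 → ℝ) (u : E2 → ℝ) : Prop :=
  ∀ φ : E2 → ℝ, ContDiff ℝ 1 φ → ∀ z ∈ Ω,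
    IsLocalMinOn (fun x => lscEnv (closure Ω) u x - φ x) Ω z →
    0 ≤ lam * lscEnv (closure Ω) u z - ep⁻¹ * (inner ℝ (b z) (gradient φ z) : ℝ)
      + G z (gradient φ z)

/-- `u` is a (bounded) viscosity subsolution of (HJ^ε) together with the Dirichlet
condition (BC^ε): `u = g` on `∂Ω`, understood in the viscosity sense. -/
def IsSubBVP (Ω : Set E2) (lam ep : ℝ) (b : E2 → E2) (G : E2 → E2 → ℝ) (g : E2 → ℝ)
    (u : E2 → ℝ) : Prop :=
  (∃ C : ℝ, ∀ x ∈ closure Ω, |u x| ≤ C) ∧ IsSubHJ Ω lam ep b G u ∧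
  ∀ φ : E2 → ℝ, ContDiff ℝ 1 φ → ∀ z ∈ frontier Ω,
    IsLocalMaxOn (fun x => uscEnv (closure Ω) u x - φ x) (closure Ω) z →
    min (lam * uscEnv (closure Ω) u z - ep⁻¹ * (inner ℝ (b z) (gradient φ z) : ℝ)
        + G z (gradient φ z))
      (uscEnv (closure Ω) u z - g z) ≤ 0

/-- `u` is a (bounded) viscosity supersolution of (HJ^ε) together with the Dirichlet
condition (BC^ε): `u = g` on `∂Ω`, understood in the viscosity sense. -/
def IsSupBVP (Ω : Set E2) (lam ep : ℝ) (b : E2 → E2) (G : E2 → E2 → ℝ) (g : E2 → ℝ)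
    (u : E2 → ℝ) : Prop :=
  (∃ C : ℝ, ∀ x ∈ closure Ω, |u x| ≤ C) ∧ IsSupHJ Ω lam ep b G u ∧
  ∀ φ : E2 → ℝ, ContDiff ℝ 1 φ → ∀ z ∈ frontier Ω,
    IsLocalMinOn (fun x => lscEnv (closure Ω) u x - φ x) (closure Ω) z →
    0 ≤ max (lam * lscEnv (closure Ω) u z - ep⁻¹ * (inner ℝ (b z) (gradient φ z) : ℝ)
        + G z (gradient φ z))
      (lscEnv (closure Ω) u z - g z)

/-- `u` is a viscosity solution of (HJ^ε) and (BC^ε). -/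
def IsSolBVP (Ω : Set E2) (lam ep : ℝ) (b : E2 → E2) (G : E2 → E2 → ℝ) (g : E2 → ℝ)
    (u : E2 → ℝ) : Prop :=
  IsSubBVP Ω lam ep b G g u ∧ IsSupBVP Ω lam ep b G g u

section Envelope

variable {X β : Type*} [TopologicalSpace X] [ConditionallyCompleteLinearOrder β]
  {s : Set X} {u : X → β}

theorem le_limsup_nhdsWithin (hu : BddAbove (u '' s)) {x : X} (hx : x ∈ s) :
    u x ≤ limsup u (𝓝[s] x) :=
  le_limsup_of_frequently_le
    ((eventually_pure.2 le_rfl : ∀ᶠ y in pure x, u x ≤ u y).frequently.filter_mono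
      (pure_le_nhdsWithin hx))
    (hu.isBoundedUnder self_mem_nhdsWithin)

theorem upperSemicontinuousOn_limsup_nhdsWithin [DenselyOrdered β]
    (hu_above : BddAbove (u '' s)) (hu_below : BddBelow (u '' s)) :
    UpperSemicontinuousOn (fun x => limsup u (𝓝[s] x)) s := by
  intro x _ a ha
  obtain ⟨a', hlt, hlt'⟩ := exists_between ha
  have hlt_near : ∀ᶠ y in 𝓝[s] x, u y < a' :=
    eventually_lt_of_limsup_lt hlt (hu_above.isBoundedUnder self_mem_nhdsWithin)
  filter_upwards [eventually_eventually_nhdsWithin.2 hlt_near, self_mem_nhdsWithin] with y hy hys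
  have : (𝓝[s] y).NeBot := mem_closure_iff_nhdsWithin_neBot.mp (subset_closure hys)
  exact (limsup_le_of_le (hu_below.isBoundedUnder self_mem_nhdsWithin).isCoboundedUnder_le
    (hy.mono fun _ => le_of_lt)).trans_lt hlt'

end Envelope

theorem bddAbove_bddBelow_image_of_forall_abs_le {α : Type*} {s : Set α} {u : α → ℝ} {C : ℝ}
    (hC : ∀ x ∈ s, |u x| ≤ C) : BddAbove (u '' s) ∧ BddBelow (u '' s) := by
  have : IsBounded (u '' s) := isBounded_iff_forall_norm_le.2 ⟨C, by
    rintro _ ⟨x, hx, rfl⟩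
    exact hC x hx⟩
  exact ⟨this.bddAbove, this.bddBelow⟩

section Viscosity

variable {Ω : Set E2} {lam ep : ℝ} {b : E2 → E2} {G : E2 → E2 → ℝ} {g : E2 → ℝ} {u : E2 → ℝ}
  {z : E2}

theorem IsSubBVP.of_isMaxOn_uscEnv (hu : IsSubBVP Ω lam ep b G g u) (hz : z ∈ closure Ω)
    (hmax : IsMaxOn (uscEnv (closure Ω) u) (closure Ω) z) :
    lam * uscEnv (closure Ω) u z + G z 0 ≤ 0 ∨
      z ∈ frontier Ω ∧ uscEnv (closure Ω) u z ≤ g z := by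
  have hloc : ∀ t ⊆ closure Ω,
      IsLocalMaxOn (fun x => uscEnv (closure Ω) u x - (fun _ => (0 : ℝ)) x) t z := fun t ht => by
    simpa only [sub_zero] using (hmax.on_subset ht).localize
  by_cases hzΩ : z ∈ Ω
  · left
    simpa using hu.2.1 _ contDiff_const z hzΩ (hloc Ω subset_closure)
  · have hzfr : z ∈ frontier Ω := ⟨hz, fun h => hzΩ (interior_subset h)⟩
    have := hu.2.2 _ contDiff_const z hzfr (hloc _ subset_rfl)
    simp only [gradient_fun_const, inner_zero_right, mul_zero, sub_zero, min_le_iff] at this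
    exact this.imp id fun h => ⟨hzfr, by linarith⟩

theorem IsSupBVP.of_isMinOn_lscEnv (hu : IsSupBVP Ω lam ep b G g u) (hz : z ∈ closure Ω)
    (hmin : IsMinOn (lscEnv (closure Ω) u) (closure Ω) z) :
    0 ≤ lam * lscEnv (closure Ω) u z + G z 0 ∨
      z ∈ frontier Ω ∧ g z ≤ lscEnv (closure Ω) u z := by
  have hloc : ∀ t ⊆ closure Ω,
      IsLocalMinOn (fun x => lscEnv (closure Ω) u x - (fun _ => (0 : ℝ)) x) t z := fun t ht => by
    simpa only [sub_zero] using (hmin.on_subset ht).localize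
  by_cases hzΩ : z ∈ Ω
  · left
    simpa using hu.2.1 _ contDiff_const z hzΩ (hloc Ω subset_closure)
  · have hzfr : z ∈ frontier Ω := ⟨hz, fun h => hzΩ (interior_subset h)⟩
    have := hu.2.2 _ contDiff_const z hzfr (hloc _ subset_rfl)
    simp only [gradient_fun_const, inner_zero_right, mul_zero, sub_zero, le_max_iff] at this
    exact this.imp id fun h => ⟨hzfr, by linarith⟩

theorem IsSubBVP.le_max (hu : IsSubBVP Ω lam ep b G g u) (hΩ : IsCompact (closure Ω))
    (hlam : 0 < lam) {A B : ℝ} (hA : ∀ z ∈ closure Ω, -G z 0 ≤ A)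
    (hB : ∀ z ∈ frontier Ω, g z ≤ B) {x : E2} (hx : x ∈ closure Ω) :
    u x ≤ max (lam⁻¹ * A) B := by
  obtain ⟨C, hC⟩ := hu.1
  obtain ⟨hbdd_above, hbdd_below⟩ := bddAbove_bddBelow_image_of_forall_abs_le hC
  obtain ⟨z, hz, hmax⟩ :=
    (upperSemicontinuousOn_limsup_nhdsWithin hbdd_above hbdd_below).exists_isMaxOn ⟨x, hx⟩ hΩ
  calc u x ≤ uscEnv (closure Ω) u x := le_limsup_nhdsWithin hbdd_above hx
    _ ≤ uscEnv (closure Ω) u z := hmax hx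
    _ ≤ max (lam⁻¹ * A) B := by
      rcases hu.of_isMaxOn_uscEnv hz hmax with h | ⟨hzfr, h⟩
      · exact le_max_of_le_left <| (le_inv_mul_iff₀ hlam).2 (by linarith [hA z hz])
      · exact le_max_of_le_right (h.trans (hB z hzfr))

theorem IsSupBVP.min_le (hu : IsSupBVP Ω lam ep b G g u) (hΩ : IsCompact (closure Ω))
    (hlam : 0 < lam) {A B : ℝ} (hA : ∀ z ∈ closure Ω, A ≤ -G z 0)
    (hB : ∀ z ∈ frontier Ω, B ≤ g z) {x : E2} (hx : x ∈ closure Ω) :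
    min (lam⁻¹ * A) B ≤ u x := by
  obtain ⟨C, hC⟩ := hu.1
  obtain ⟨hbdd_above, hbdd_below⟩ := bddAbove_bddBelow_image_of_forall_abs_le hC
  -- `liminf` in `ℝ` is `limsup` in `ℝᵒᵈ`.
  obtain ⟨z, hz, hmin⟩ := (upperSemicontinuousOn_limsup_nhdsWithin (β := ℝᵒᵈ)
    hbdd_below hbdd_above).exists_isMaxOn ⟨x, hx⟩ hΩ
  calc min (lam⁻¹ * A) B ≤ lscEnv (closure Ω) u z := by
        rcases hu.of_isMinOn_lscEnv hz hmin with h | ⟨hzfr, h⟩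
        · exact min_le_of_left_le <| (inv_mul_le_iff₀ hlam).2 (by linarith [hA z hz])
        · exact min_le_of_right_le ((hB z hzfr).trans h)
    _ ≤ lscEnv (closure Ω) u x := hmin hx
    _ ≤ u x := le_limsup_nhdsWithin (β := ℝᵒᵈ) hbdd_below hx

end Viscosity

theorem viscosity_solutions_uniformly_bounded_general
    (Ω : Set E2) (hΩbdd : IsBounded Ω)
    (lam : ℝ) (hlam : 0 < lam)
    (b : E2 → E2)
    (G : E2 → E2 → ℝ)
    (hG : ContinuousOn (fun p : E2 × E2 => G p.1 p.2) (closure Ω ×ˢ (univ : Set E2)))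
    (g : E2 → ℝ) (hg : ContinuousOn g (frontier Ω)) :
    ∀ ep : ℝ, 0 < ep → ∀ v : E2 → ℝ, IsSolBVP Ω lam ep b G g v →
      ∀ x ∈ closure Ω,
        |v x| ≤ max (lam⁻¹ * sSup ((fun y => |G y 0|) '' closure Ω))
                    (sSup ((fun y => |g y|) '' frontier Ω)) := by
  intro ep _ v hv x hx
  have hΩ : IsCompact (closure Ω) := hΩbdd.isCompact_closure
  have hG0 : BddAbove ((fun y => |G y 0|) '' closure Ω) :=
    (hΩ.image_of_continuousOn (hG.comp (continuousOn_id.prodMk continuousOn_const)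
      fun y hy => ⟨hy, mem_univ _⟩).abs).bddAbove
  have hg0 : BddAbove ((fun y => |g y|) '' frontier Ω) :=
    ((hΩ.of_isClosed_subset isClosed_frontier frontier_subset_closure).image_of_continuousOn
      hg.abs).bddAbove
  have hA : ∀ z ∈ closure Ω, |G z 0| ≤ sSup ((fun y => |G y 0|) '' closure Ω) :=
    fun z hz => le_csSup hG0 (mem_image_of_mem _ hz)
  have hB : ∀ z ∈ frontier Ω, |g z| ≤ sSup ((fun y => |g y|) '' frontier Ω) :=
    fun z hz => le_csSup hg0 (mem_image_of_mem _ hz)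
  refine abs_le.2 ⟨?_, hv.1.le_max hΩ hlam (fun z hz => (neg_le_abs _).trans (hA z hz))
    (fun z hz => (le_abs_self _).trans (hB z hz)) hx⟩
  have := hv.2.min_le hΩ hlam (fun z hz => neg_le_neg ((le_abs_self _).trans (hA z hz)))
    (fun z hz => (neg_le_neg (hB z hz)).trans (neg_abs_le _)) hx
  rwa [mul_neg, min_neg_neg] at this

/-- Every viscosity solution `v` of (HJ^ε) and (BC^ε) satisfies
`sup_{cl Ω} |v| ≤ max { λ⁻¹ · max_{cl Ω} |G(·,0)|, max_{∂Ω} |g| }`; in particular the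
union over all `ε > 0` of the sets of viscosity solutions is uniformly bounded on `cl Ω`. -/
theorem viscosity_solutions_uniformly_bounded
    (Ω : Set E2) (hΩopen : IsOpen Ω) (hΩbdd : IsBounded Ω)
    (lam : ℝ) (hlam : 0 < lam)
    (b : E2 → E2) (hb : ContinuousOn b (closure Ω))
    (G : E2 → E2 → ℝ)
    (hG : ContinuousOn (fun p : E2 × E2 => G p.1 p.2) (closure Ω ×ˢ (univ : Set E2)))
    (g : E2 → ℝ) (hg : ContinuousOn g (frontier Ω)) :
    ∀ ep : ℝ, 0 < ep → ∀ v : E2 → ℝ, IsSolBVP Ω lam ep b G g v →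
      ∀ x ∈ closure Ω,
        |v x| ≤ max (lam⁻¹ * sSup ((fun y => |G y 0|) '' closure Ω))
                    (sSup ((fun y => |g y|) '' frontier Ω)) :=
  viscosity_solutions_uniformly_bounded_general Ω hΩbdd lam hlam b G hG g hg
end
end

section
/- Let m ∈ ℕ, let U be an open subset of ℝ^m, let E : U → ℝ^m be Lipschitz continuous, let λ ≥ 0 be a constant and f : U → ℝ continuous. Let v : U → ℝ be upper semicontinuous and a viscosity subsolution of λv − E·Dv − f = 0 in U. Let c < d be real numbers and X : (c,d) → U a C¹ curve with X′(t) = E(X(t)) for all t ∈ (c,d). Then for all σ, τ with c < σ < τ < d, e^{−λσ} v(X(σ)) ≤ e^{−λτ} v(X(τ)) + ∫_σ^τ e^{−λt} f(X(t)) dt. -/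
open Filter Topology Set Metric

/-!
Put `w t = e^{-λt} v (X t) + ∫_σ^t e^{-λs} f (X s) ds`; the claim is `w σ ≤ w τ`. Undoing this
change of unknown on test functions shows that `w` is a viscosity subsolution of `-w' = 0` as soon
as `t ↦ v (X t)` is one of `λu - u' - f (X t) = 0`, and an upper semicontinuous subsolution of
`-w' = 0` is nondecreasing: otherwise a test function of negative slope, with a barrier on the
left, touches `w` from above at an interior point.

That `v ∘ X` is a subsolution in time is shown by doubling the variables. Near a strict maximum
`t₀` of `v (X t) - ψ t`, maximize `v x - ψ t - n ‖x - X t‖²` over a compact box. The maximizers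
`(xₙ, tₙ)` tend to `(X t₀, t₀)` with `v xₙ → v (X t₀)` and `n ‖xₙ - X tₙ‖² → 0`. The spatial
subsolution inequality at `xₙ` (test function `n ‖· - X tₙ‖²`) and the first-order condition in
`t` at `tₙ` differ only by `⟪E xₙ - E (X tₙ), 2n (xₙ - X tₙ)⟫ ≤ 2K n ‖xₙ - X tₙ‖²`, which vanishes
in the limit.
-/

theorem UpperSemicontinuousOn.mul_of_pos {α : Type*} [TopologicalSpace α] {s : Set α}
    {a u : α → ℝ} (ha : ContinuousOn a s) (ha_pos : ∀ x ∈ s, 0 < a x)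
    (hu : UpperSemicontinuousOn u s) : UpperSemicontinuousOn (fun x => a x * u x) s := by
  intro x hx y hy
  obtain ⟨b, hub, hby⟩ := exists_between ((lt_div_iff₀' (ha_pos x hx)).2 hy)
  have hab : a x * b < y := (lt_div_iff₀' (ha_pos x hx)).1 hby
  filter_upwards [hu x hx b hub, ((ha x hx).mul continuousWithinAt_const).eventually_lt_const hab,
    self_mem_nhdsWithin] with z hzb hzy hz
  exact (mul_lt_mul_of_pos_left hzb (ha_pos z hz)).trans hzy

theorem UpperSemicontinuousOn.sub_continuousOn {α : Type*} [TopologicalSpace α] {s : Set α}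
    {f g : α → ℝ} (hf : UpperSemicontinuousOn f s) (hg : ContinuousOn g s) :
    UpperSemicontinuousOn (fun x => f x - g x) s := by
  simp only [sub_eq_add_neg]
  exact hf.add hg.neg.upperSemicontinuousOn

theorem tendsto_of_isMaxOn_penalized {α : Type*} [TopologicalSpace α] {S : Set α}
    {Φ Ψ : α → ℝ} {p₀ : α} {p : ℕ → α} (hS : IsCompact S) (hΦ : UpperSemicontinuousOn Φ S)
    (hΨ : ContinuousOn Ψ S) (hΨ_nonneg : ∀ q ∈ S, 0 ≤ Ψ q) (hp₀ : p₀ ∈ S) (hΨp₀ : Ψ p₀ = 0)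
    (hunique : ∀ q ∈ S, Ψ q = 0 → Φ p₀ ≤ Φ q → q = p₀) (hp : ∀ n, p n ∈ S)
    (hmax : ∀ n : ℕ, IsMaxOn (fun q => Φ q - n * Ψ q) S (p n)) :
    Tendsto p atTop (𝓝 p₀) ∧ Tendsto (fun n : ℕ => Φ (p n)) atTop (𝓝 (Φ p₀)) ∧
      Tendsto (fun n : ℕ => n * Ψ (p n)) atTop (𝓝 0) := by
  have hgain : ∀ n : ℕ, Φ p₀ + n * Ψ (p n) ≤ Φ (p n) := fun n => by
    have : Φ p₀ - n * Ψ p₀ ≤ Φ (p n) - n * Ψ (p n) := hmax n hp₀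
    rw [hΨp₀, mul_zero, sub_zero] at this
    linarith
  have hΦ_ge : ∀ n, Φ p₀ ≤ Φ (p n) := fun n =>
    le_trans (le_add_of_nonneg_right (by have := hΨ_nonneg _ (hp n); positivity)) (hgain n)
  obtain ⟨B, hB⟩ := hΦ.bddAbove_of_isCompact hS
  have hΨ_lim : Tendsto (fun n => Ψ (p n)) atTop (𝓝 0) := by
    refine squeeze_zero' (.of_forall fun n => hΨ_nonneg _ (hp n))
      (eventually_gt_atTop 0 |>.mono fun n hn => ?_)
      (tendsto_const_div_atTop_nhds_zero_nat (B - Φ p₀))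
    rw [le_div_iff₀' (by exact_mod_cast hn)]
    linarith [hgain n, hB (mem_image_of_mem Φ (hp n))]
  have hfreq : ∀ q, MapClusterPt q atTop p → ∀ {P : α → Prop}, (∀ᶠ y in 𝓝[S] q, P y) →
      ∃ᶠ n in atTop, P (p n) := fun q hq P hP =>
    (hq.frequently (eventually_nhdsWithin_iff.1 hP)).mono fun n hn => hn (hp n)
  have hconv : Tendsto p atTop (𝓝 p₀) := by
    refine hS.tendsto_nhds_of_unique_mapClusterPt (.of_forall hp) fun q hqS hq =>
      hunique q hqS ?_ ?_
    · by_contra hne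
      have hpos : 0 < Ψ q := lt_of_le_of_ne (hΨ_nonneg q hqS) (Ne.symm hne)
      obtain ⟨n, hn, hn'⟩ := ((hfreq q hq ((hΨ q hqS).eventually_const_lt (half_lt_self hpos)))
        |>.and_eventually (hΨ_lim.eventually_lt_const (half_pos hpos))).exists
      exact lt_asymm hn hn'
    · by_contra! hlt
      obtain ⟨n, hn⟩ := (hfreq q hq (hΦ q hqS _ hlt)).exists
      exact (hΦ_ge n).not_gt hn
  have hΦ_lim : Tendsto (fun n => Φ (p n)) atTop (𝓝 (Φ p₀)) := by
    refine tendsto_order.2 ⟨fun y hy => .of_forall fun n => hy.trans_le (hΦ_ge n), fun y hy => ?_⟩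
    exact (tendsto_nhdsWithin_iff.2 ⟨hconv, .of_forall hp⟩).eventually (hΦ p₀ hp₀ y hy)
  refine ⟨hconv, hΦ_lim, squeeze_zero (fun n => by have := hΨ_nonneg _ (hp n); positivity)
    (fun n => ?_) (by simpa using hΦ_lim.sub_const (Φ p₀))⟩
  linarith [hgain n]

/-- `H t y p` is the Hamiltonian at time `t`, value `y` and slope `p`. -/
def IsViscositySubsolutionOn (H : ℝ → ℝ → ℝ → ℝ) (w : ℝ → ℝ) (s : Set ℝ) : Prop :=
  ∀ ψ ψ' : ℝ → ℝ, (∀ t ∈ s, HasDerivAt ψ (ψ' t) t) → ContinuousOn ψ' s →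
    ∀ t ∈ s, IsLocalMaxOn (fun t => w t - ψ t) s t → H t (w t) (ψ' t) ≤ 0

theorem hasDerivAt_expNegInvGlue (x : ℝ) :
    HasDerivAt expNegInvGlue (deriv expNegInvGlue x) x :=
  ((expNegInvGlue.contDiff (n := 1)).differentiable one_ne_zero x).hasDerivAt

theorem IsViscositySubsolutionOn.monotoneOn {w : ℝ → ℝ} {c d : ℝ}
    (hw : UpperSemicontinuousOn w (Ioo c d))
    (hsub : IsViscositySubsolutionOn (fun _ _ p => -p) w (Ioo c d)) :
    MonotoneOn w (Ioo c d) := by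
  intro σ hσ τ hτ hστ
  rcases hστ.eq_or_lt with rfl | hστ
  · rfl
  by_contra! hlt
  obtain ⟨a, hca, haσ⟩ := exists_between hσ.1
  have hsub_Icc : Icc a τ ⊆ Ioo c d := Icc_subset_Ioo hca hτ.2
  set ε := (w σ - w τ) / (2 * (τ - σ))
  have hε : 0 < ε := div_pos (by linarith) (by linarith)
  have hβa : 0 < expNegInvGlue (σ - a) := expNegInvGlue.pos_of_pos (by linarith)
  -- `expNegInvGlue (σ - t)` is a smooth nonincreasing barrier vanishing on `[σ, ∞)`
  set C := |w a - w σ| / expNegInvGlue (σ - a)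
  set ψ : ℝ → ℝ := fun t => ε * (σ - t) + C * expNegInvGlue (σ - t)
  set ψ' : ℝ → ℝ := fun t => -ε - C * deriv expNegInvGlue (σ - t)
  have hψ : ∀ t, HasDerivAt ψ (ψ' t) t := fun t => by
    have hlin : HasDerivAt (fun t => σ - t) (-1) t := by
      simpa using (hasDerivAt_id t).const_sub σ
    exact ((hlin.const_mul ε).add (((hasDerivAt_expNegInvGlue _).comp t hlin).const_mul C))
      |>.congr_deriv (by ring)
  have hψ'_neg : ∀ t, ψ' t < 0 := fun t => by
    have := mul_nonneg (div_nonneg (abs_nonneg (w a - w σ)) hβa.le)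
      (expNegInvGlue.monotone.deriv_nonneg (x := σ - t))
    simp only [ψ']; linarith
  have hψ'_cont : Continuous ψ' :=
    continuous_const.sub (continuous_const.mul
      ((expNegInvGlue.contDiff (n := 1)).continuous_deriv le_rfl |>.comp
        (continuous_const.sub continuous_id)))
  have hσ_mem : σ ∈ Icc a τ := ⟨haσ.le, hστ.le⟩
  obtain ⟨t₁, ht₁, hmax⟩ := ((hw.mono hsub_Icc).sub_continuousOn
    (fun t _ => (hψ t).continuousAt.continuousWithinAt)).exists_isMaxOn ⟨σ, hσ_mem⟩ isCompact_Icc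
  have hσ_le : w σ ≤ w t₁ - ψ t₁ := by
    simpa [ψ, expNegInvGlue.zero] using hmax hσ_mem
  have ha_lt : w a - ψ a < w σ := by
    have : C * expNegInvGlue (σ - a) = |w a - w σ| := div_mul_cancel₀ _ hβa.ne'
    simp only [ψ, this]
    nlinarith [le_abs_self (w a - w σ), mul_pos hε (sub_pos.2 haσ)]
  have hτ_lt : w τ - ψ τ < w σ := by
    have : ε * (σ - τ) = -(w σ - w τ) / 2 := by simp only [ε]; field_simp; ring
    simp only [ψ, expNegInvGlue.zero_of_nonpos (by linarith : σ - τ ≤ 0), this]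
    linarith
  have ht₁_mem : t₁ ∈ Ioo a τ :=
    ⟨ht₁.1.lt_of_ne (by rintro rfl; linarith), ht₁.2.lt_of_ne (by rintro rfl; linarith)⟩
  have hloc : IsLocalMaxOn (fun t => w t - ψ t) (Ioo c d) t₁ :=
    (hmax.isLocalMax (Icc_mem_nhds ht₁_mem.1 ht₁_mem.2)).on _
  have := hsub ψ ψ' (fun t _ => hψ t) hψ'_cont.continuousOn t₁ (hsub_Icc ht₁) hloc
  linarith [hψ'_neg t₁]

theorem IsViscositySubsolutionOn.exp_mul_add {u g G : ℝ → ℝ} {s : Set ℝ} {lam : ℝ}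
    (hu : IsViscositySubsolutionOn (fun t y p => lam * y - p - g t) u s)
    (hg : ContinuousOn g s) (hG : ∀ t ∈ s, HasDerivAt G (Real.exp (-lam * t) * g t) t) :
    IsViscositySubsolutionOn (fun _ _ p => -p) (fun t => Real.exp (-lam * t) * u t + G t) s := by
  intro χ χ' hχ hχ'_cont t₁ ht₁ hmax
  have hexp : ∀ t, Real.exp (lam * t) * Real.exp (-lam * t) = 1 := fun t => by
    rw [← Real.exp_add, neg_mul, add_neg_cancel, Real.exp_zero]
  set κ := Real.exp (-lam * t₁) * u t₁ + G t₁ - χ t₁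
  -- undo the change of unknown `w = e^{-λt} u + G` on the test function
  set ψ : ℝ → ℝ := fun t => Real.exp (lam * t) * (χ t + κ - G t)
  set ψ' : ℝ → ℝ := fun t => lam * Real.exp (lam * t) * (χ t + κ - G t) +
    Real.exp (lam * t) * (χ' t - Real.exp (-lam * t) * g t)
  have hψ : ∀ t ∈ s, HasDerivAt ψ (ψ' t) t := fun t ht => by
    have he : HasDerivAt (fun t => Real.exp (lam * t)) (lam * Real.exp (lam * t)) t := by
      simpa [mul_comm] using ((hasDerivAt_id t).const_mul lam).exp
    exact he.mul (((hχ t ht).add_const κ).sub (hG t ht))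
  have hχ_cont : ContinuousOn χ s := fun t ht => (hχ t ht).continuousAt.continuousWithinAt
  have hG_cont : ContinuousOn G s := fun t ht => (hG t ht).continuousAt.continuousWithinAt
  have hψ'_cont : ContinuousOn ψ' s := by fun_prop
  have hdiff : ∀ t, u t - ψ t =
      Real.exp (lam * t) * (Real.exp (-lam * t) * u t + G t - χ t - κ) := fun t => by
    linear_combination (-u t) * hexp t
  have hmax' : IsLocalMaxOn (fun t => u t - ψ t) s t₁ := by
    have h₁ : u t₁ - ψ t₁ = 0 := by rw [hdiff]; simp [κ]
    filter_upwards [hmax] with t ht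
    rw [h₁, hdiff]
    exact mul_nonpos_of_nonneg_of_nonpos (Real.exp_pos _).le (by linarith)
  have := hu ψ ψ' hψ hψ'_cont t₁ ht₁ hmax'
  have hψ't₁ : ψ' t₁ = lam * u t₁ + Real.exp (lam * t₁) * χ' t₁ - g t₁ := by
    simp only [ψ', κ]
    linear_combination (lam * u t₁ - g t₁) * hexp t₁
  rw [hψ't₁] at this
  nlinarith [Real.exp_pos (lam * t₁)]

section Doubling

variable {F : Type*} [NormedAddCommGroup F] {U : Set F} {E : F → F} {K : NNReal} {lam : ℝ}
  {f v : F → ℝ} {X : ℝ → F} {s : Set ℝ} {ψ ψ' : ℝ → ℝ} {t₀ δ : ℝ}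

theorem exists_seq_isLocalMax_penalized [ProperSpace F] (hU : IsOpen U)
    (hv : UpperSemicontinuousOn v U)
    (hXU : MapsTo X s U) (hX : ContinuousOn X s) (hψ : ContinuousOn ψ s)
    (hδ : 0 < δ) (hδs : closedBall t₀ δ ⊆ s)
    (hstrict : ∀ t ∈ closedBall t₀ δ, t ≠ t₀ → v (X t) - ψ t < v (X t₀) - ψ t₀) :
    ∃ p : ℕ → F × ℝ, (∀ n, (p n).1 ∈ U ∧ (p n).2 ∈ s) ∧
      (∀ᶠ n : ℕ in atTop,
        IsLocalMax (fun q : F × ℝ => v q.1 - ψ q.2 - n * ‖q.1 - X q.2‖ ^ 2) (p n)) ∧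
      Tendsto p atTop (𝓝 (X t₀, t₀)) ∧ Tendsto (fun n => v (p n).1) atTop (𝓝 (v (X t₀))) ∧
      Tendsto (fun n : ℕ => n * ‖(p n).1 - X (p n).2‖ ^ 2) atTop (𝓝 0) := by
  have ht₀ : t₀ ∈ s := hδs (mem_closedBall_self hδ.le)
  obtain ⟨r, hr, hrU⟩ := nhds_basis_closedBall.mem_iff.1 (hU.mem_nhds (hXU ht₀))
  set S := closedBall (X t₀) r ×ˢ closedBall t₀ δ
  have hS : IsCompact S := (isCompact_closedBall _ _).prod (isCompact_closedBall _ _)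
  have hp₀ : (X t₀, t₀) ∈ S := ⟨mem_closedBall_self hr.le, mem_closedBall_self hδ.le⟩
  set Φ : F × ℝ → ℝ := fun q => v q.1 - ψ q.2
  set Ψ : F × ℝ → ℝ := fun q => ‖q.1 - X q.2‖ ^ 2
  have hΦ : UpperSemicontinuousOn Φ S :=
    (hv.comp continuous_fst.continuousOn fun q hq => hrU hq.1).sub_continuousOn
      (hψ.comp continuous_snd.continuousOn fun q hq => hδs hq.2)
  have hΨ : ContinuousOn Ψ S :=
    ((continuous_fst.continuousOn.sub
      (hX.comp continuous_snd.continuousOn fun q hq => hδs hq.2)).norm.pow 2)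
  have hunique : ∀ q ∈ S, Ψ q = 0 → Φ (X t₀, t₀) ≤ Φ q → q = (X t₀, t₀) := by
    rintro ⟨x, t⟩ hq hΨq hΦq
    obtain rfl : x = X t := sub_eq_zero.1 (norm_eq_zero.1 (pow_eq_zero_iff two_ne_zero |>.1 hΨq))
    by_cases ht : t = t₀
    · rw [ht]
    · exact absurd hΦq (not_le.2 (hstrict t hq.2 ht))
  have hmax : ∀ n : ℕ, ∃ q ∈ S, IsMaxOn (fun q => Φ q - n * Ψ q) S q := fun n =>
    (hΦ.sub_continuousOn (continuousOn_const.mul hΨ)).exists_isMaxOn ⟨_, hp₀⟩ hS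
  choose p hpS hpmax using hmax
  obtain ⟨hp_lim, hΦ_lim, hpen_lim⟩ := tendsto_of_isMaxOn_penalized hS hΦ hΨ
    (fun q _ => by positivity) hp₀ (by simp [Ψ]) hunique hpS hpmax
  have hS_nhds : ∀ᶠ n in atTop, S ∈ 𝓝 (p n) :=
    hp_lim.eventually ((isOpen_ball.prod isOpen_ball).eventually_mem
      ⟨mem_ball_self hr, mem_ball_self hδ⟩) |>.mono fun n hn =>
        mem_of_superset ((isOpen_ball.prod isOpen_ball).mem_nhds hn)
          (prod_mono ball_subset_closedBall ball_subset_closedBall)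
  refine ⟨p, fun n => ⟨hrU (hpS n).1, hδs (hpS n).2⟩, hS_nhds.mono fun n hn =>
    (hpmax n).isLocalMax hn, hp_lim, ?_, hpen_lim⟩
  simpa [Φ] using hΦ_lim.add ((hψ t₀ ht₀).tendsto.comp (tendsto_nhdsWithin_iff.2
    ⟨(continuous_snd.tendsto _).comp hp_lim, .of_forall fun n => hδs (hpS n).2⟩))

variable [InnerProductSpace ℝ F]

theorem inner_gradient_mul_norm_sub_sq [CompleteSpace F] (N : ℝ) (a x e : F) :
    inner ℝ e (gradient (fun y => N * ‖y - a‖ ^ 2) x) = 2 * N * inner ℝ (x - a) e := by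
  have h : HasFDerivAt (fun y => N * ‖y - a‖ ^ 2) _ x :=
    (((hasFDerivAt_id x).sub_const a).norm_sq).const_mul N
  rw [real_inner_comm, inner_gradient_left, h.fderiv]
  simp only [id_eq, ContinuousLinearMap.comp_id, smul_apply,
    coe_innerSL_apply, nsmul_eq_mul, Nat.cast_ofNat, smul_eq_mul]
  ring

theorem subsolution_ineq_at_penalized_max [CompleteSpace F] (hE : LipschitzOnWith K E U)
    (hvsub : ∀ φ : F → ℝ, ContDiff ℝ 1 φ → ∀ z ∈ U, IsLocalMaxOn (fun x => v x - φ x) U z →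
      lam * v z - (inner ℝ (E z) (gradient φ z) : ℝ) - f z ≤ 0)
    {ψ' N t : ℝ} {x : F} (hN : 0 ≤ N) (hx : x ∈ U) (hXt : X t ∈ U)
    (hX : HasDerivAt X (E (X t)) t) (hψ : HasDerivAt ψ ψ' t)
    (hmax : IsLocalMax (fun q : F × ℝ => v q.1 - ψ q.2 - N * ‖q.1 - X q.2‖ ^ 2) (x, t)) :
    lam * v x - ψ' - f x ≤ 2 * K * (N * ‖x - X t‖ ^ 2) := by
  set a := X t
  have hspace : IsLocalMaxOn (fun y => v y - N * ‖y - a‖ ^ 2) U x := by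
    refine IsLocalMax.on ?_ U
    filter_upwards [hmax.comp_continuous (g := fun y => (y, t)) (by fun_prop)] with y hy
    simp only [Function.comp_apply] at hy
    linarith
  have hsub := hvsub (fun y => N * ‖y - a‖ ^ 2)
    (contDiff_const.mul ((contDiff_id.sub contDiff_const).norm_sq ℝ)) x hx hspace
  rw [inner_gradient_mul_norm_sub_sq] at hsub
  have htime : ψ' = 2 * N * inner ℝ (x - a) (E a) := by
    have hd := ((hasDerivAt_const t (v x)).sub hψ).sub
      (((hX.const_sub x).norm_sq).const_mul N)
    have := (hmax.comp_continuous (g := fun s => (x, s)) (by fun_prop)).hasDerivAt_eq_zero hd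
    simp only [inner_neg_right] at this
    linarith
  have hlip : inner ℝ (x - a) (E x - E a) ≤ K * ‖x - a‖ ^ 2 := by
    calc inner ℝ (x - a) (E x - E a) ≤ ‖x - a‖ * ‖E x - E a‖ := real_inner_le_norm _ _
      _ ≤ ‖x - a‖ * (K * ‖x - a‖) := by
        gcongr
        simpa [dist_eq_norm] using hE.dist_le_mul x hx a hXt
      _ = K * ‖x - a‖ ^ 2 := by ring
  rw [inner_sub_right] at hlip
  nlinarith

theorem subsolution_ineq_of_strict_max [ProperSpace F] (hU : IsOpen U)
    (hE : LipschitzOnWith K E U) (hf : ContinuousOn f U) (hv : UpperSemicontinuousOn v U)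
    (hvsub : ∀ φ : F → ℝ, ContDiff ℝ 1 φ → ∀ z ∈ U, IsLocalMaxOn (fun x => v x - φ x) U z →
      lam * v z - (inner ℝ (E z) (gradient φ z) : ℝ) - f z ≤ 0)
    (hXU : MapsTo X s U) (hX : ∀ t ∈ s, HasDerivAt X (E (X t)) t)
    (hψ : ∀ t ∈ s, HasDerivAt ψ (ψ' t) t) (hψ' : ContinuousOn ψ' s)
    (hδ : 0 < δ) (hδs : closedBall t₀ δ ⊆ s)
    (hstrict : ∀ t ∈ closedBall t₀ δ, t ≠ t₀ → v (X t) - ψ t < v (X t₀) - ψ t₀) :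
    lam * v (X t₀) - ψ' t₀ - f (X t₀) ≤ 0 := by
  have hs : s ∈ 𝓝 t₀ := mem_of_superset (closedBall_mem_nhds t₀ hδ) hδs
  obtain ⟨p, hp_mem, hp_max, hp_lim, hv_lim, hpen_lim⟩ :=
    exists_seq_isLocalMax_penalized hU hv hXU
      (fun t ht => (hX t ht).continuousAt.continuousWithinAt)
    (fun t ht => (hψ t ht).continuousAt.continuousWithinAt) hδ hδs hstrict
  have hineq : ∀ᶠ n : ℕ in atTop, lam * v (p n).1 - ψ' (p n).2 - f (p n).1 ≤
      2 * K * (n * ‖(p n).1 - X (p n).2‖ ^ 2) := hp_max.mono fun n hn =>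
    subsolution_ineq_at_penalized_max hE hvsub n.cast_nonneg (hp_mem n).1 (hXU (hp_mem n).2)
      (hX _ (hp_mem n).2) (hψ _ (hp_mem n).2) hn
  have hf_lim : Tendsto (fun n => f (p n).1) atTop (𝓝 (f (X t₀))) :=
    (hf _ (hXU (mem_of_mem_nhds hs))).tendsto.comp (tendsto_nhdsWithin_iff.2
      ⟨(continuous_fst.tendsto _).comp hp_lim, .of_forall fun n => (hp_mem n).1⟩)
  have hψ'_lim : Tendsto (fun n => ψ' (p n).2) atTop (𝓝 (ψ' t₀)) :=
    ((hψ' t₀ (mem_of_mem_nhds hs)).continuousAt hs).tendsto.comp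
      ((continuous_snd.tendsto _).comp hp_lim)
  exact le_of_tendsto_of_tendsto (((hv_lim.const_mul lam).sub hψ'_lim).sub hf_lim)
    (by simpa using hpen_lim.const_mul (2 * (K : ℝ))) hineq

theorem isViscositySubsolutionOn_comp_trajectory [ProperSpace F] (hU : IsOpen U)
    (hE : LipschitzOnWith K E U) (hf : ContinuousOn f U) (hv : UpperSemicontinuousOn v U)
    (hvsub : ∀ φ : F → ℝ, ContDiff ℝ 1 φ → ∀ z ∈ U, IsLocalMaxOn (fun x => v x - φ x) U z →
      lam * v z - (inner ℝ (E z) (gradient φ z) : ℝ) - f z ≤ 0)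
    (hs : IsOpen s) (hXU : MapsTo X s U) (hX : ∀ t ∈ s, HasDerivAt X (E (X t)) t) :
    IsViscositySubsolutionOn (fun t y p => lam * y - p - f (X t)) (fun t => v (X t)) s := by
  intro ψ ψ' hψ hψ' t₀ ht₀ hmax
  obtain ⟨δ, hδ, hδs⟩ := nhds_basis_closedBall.eventually_iff.1
    ((hs.eventually_mem ht₀).and (hmax.isLocalMax (hs.mem_nhds ht₀)))
  have hsq : ∀ t, HasDerivAt (fun t => (t - t₀) ^ 2) (2 * (t - t₀)) t := fun t => by
    simpa using ((hasDerivAt_id' t).sub_const t₀).fun_pow 2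
  -- adding `(t - t₀) ^ 2` makes the maximum strict without changing the derivative at `t₀`
  simpa using subsolution_ineq_of_strict_max (ψ := fun t => ψ t + (t - t₀) ^ 2)
    (ψ' := fun t => ψ' t + 2 * (t - t₀)) hU hE hf hv hvsub hXU hX
    (fun t ht => (hψ t ht).add (hsq t)) (hψ'.add (by fun_prop)) hδ (fun t ht => (hδs ht).1)
    fun t ht hne => by
      have := (hδs ht).2
      have : 0 < (t - t₀) ^ 2 := pow_two_pos_of_ne_zero (sub_ne_zero.2 hne)
      simp only [sub_self, ne_eq, OfNat.ofNat_ne_zero, not_false_eq_true, zero_pow, add_zero]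
      linarith

end Doubling

theorem hasDerivAt_integral_of_continuousOn {g : ℝ → ℝ} {c d a t : ℝ}
    (hg : ContinuousOn g (Ioo c d)) (ha : a ∈ Ioo c d) (ht : t ∈ Ioo c d) :
    HasDerivAt (fun u => ∫ x in a..u, g x) (g t) t :=
  intervalIntegral.integral_hasDerivAt_right
    (hg.mono (ordConnected_Ioo.uIcc_subset ha ht)).intervalIntegrable
    (hg.stronglyMeasurableAtFilter isOpen_Ioo t ht) (hg.continuousAt (isOpen_Ioo.mem_nhds ht))

theorem subsolution_along_trajectory_general
    (m : ℕ) (U : Set (EuclideanSpace ℝ (Fin m))) (hU : IsOpen U)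
    (E : EuclideanSpace ℝ (Fin m) → EuclideanSpace ℝ (Fin m))
    (hE : ∃ K : NNReal, LipschitzOnWith K E U)
    (lam : ℝ)
    (f : EuclideanSpace ℝ (Fin m) → ℝ) (hf : ContinuousOn f U)
    (v : EuclideanSpace ℝ (Fin m) → ℝ) (hv : UpperSemicontinuousOn v U)
    (hvsub : ∀ φ : EuclideanSpace ℝ (Fin m) → ℝ, ContDiff ℝ 1 φ → ∀ z ∈ U,
      IsLocalMaxOn (fun x => v x - φ x) U z →
      lam * v z - (inner ℝ (E z) (gradient φ z) : ℝ) - f z ≤ 0)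
    (c d : ℝ)
    (X : ℝ → EuclideanSpace ℝ (Fin m))
    (hXU : ∀ t ∈ Ioo c d, X t ∈ U)
    (hX : ∀ t ∈ Ioo c d, HasDerivAt X (E (X t)) t)
    (σ τ : ℝ) (h1 : c < σ) (h2 : σ < τ) (h3 : τ < d) :
    Real.exp (-lam * σ) * v (X σ) ≤
      Real.exp (-lam * τ) * v (X τ) + ∫ t in σ..τ, Real.exp (-lam * t) * f (X t) := by
  obtain ⟨K, hK⟩ := hE
  have hσ : σ ∈ Ioo c d := ⟨h1, h2.trans h3⟩
  have hτ : τ ∈ Ioo c d := ⟨h1.trans h2, h3⟩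
  have hXc : ContinuousOn X (Ioo c d) := fun t ht => (hX t ht).continuousAt.continuousWithinAt
  have hfX : ContinuousOn (fun t => f (X t)) (Ioo c d) := hf.comp hXc hXU
  set G := fun t => ∫ x in σ..t, Real.exp (-lam * x) * f (X x)
  have hG : ∀ t ∈ Ioo c d, HasDerivAt G (Real.exp (-lam * t) * f (X t)) t := fun t ht =>
    hasDerivAt_integral_of_continuousOn ((by fun_prop : Continuous fun t =>
      Real.exp (-lam * t)).continuousOn.mul hfX) hσ ht
  have hw : UpperSemicontinuousOn (fun t => Real.exp (-lam * t) * v (X t) + G t) (Ioo c d) :=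
    ((hv.comp hXc hXU).mul_of_pos (by fun_prop) fun _ _ => Real.exp_pos _).add
      fun t ht => (hG t ht).continuousAt.continuousWithinAt.upperSemicontinuousWithinAt
  have hmono := ((isViscositySubsolutionOn_comp_trajectory hU hK hf hv hvsub isOpen_Ioo hXU hX
    ).exp_mul_add hfX hG).monotoneOn hw hσ hτ h2.le
  simpa [G] using hmono

/-- Along a trajectory of the Lipschitz vector field `E`, an upper
semicontinuous viscosity subsolution `v` of `λ v − E·Dv − f = 0` satisfies the
integrated (sub-)dynamic programming inequality
`e^{−λσ} v(X(σ)) ≤ e^{−λτ} v(X(τ)) + ∫_σ^τ e^{−λ t} f(X(t)) dt`. -/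
theorem subsolution_along_trajectory
    (m : ℕ) (U : Set (EuclideanSpace ℝ (Fin m))) (hU : IsOpen U)
    (E : EuclideanSpace ℝ (Fin m) → EuclideanSpace ℝ (Fin m))
    (hE : ∃ K : NNReal, LipschitzOnWith K E U)
    (lam : ℝ) (hlam : 0 ≤ lam)
    (f : EuclideanSpace ℝ (Fin m) → ℝ) (hf : ContinuousOn f U)
    (v : EuclideanSpace ℝ (Fin m) → ℝ) (hv : UpperSemicontinuousOn v U)
    (hvsub : ∀ φ : EuclideanSpace ℝ (Fin m) → ℝ, ContDiff ℝ 1 φ → ∀ z ∈ U,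
      IsLocalMaxOn (fun x => v x - φ x) U z →
      lam * v z - (inner ℝ (E z) (gradient φ z) : ℝ) - f z ≤ 0)
    (c d : ℝ) (hcd : c < d)
    (X : ℝ → EuclideanSpace ℝ (Fin m))
    (hXU : ∀ t ∈ Ioo c d, X t ∈ U)
    (hX : ∀ t ∈ Ioo c d, HasDerivAt X (E (X t)) t)
    (σ τ : ℝ) (h1 : c < σ) (h2 : σ < τ) (h3 : τ < d) :
    Real.exp (-lam * σ) * v (X σ) ≤
      Real.exp (-lam * τ) * v (X τ) + ∫ t in σ..τ, Real.exp (-lam * t) * f (X t) :=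
  subsolution_along_trajectory_general m U hU E hE lam f hf v hv hvsub c d X hXU hX σ τ h1 h2 h3
end

section
/- Let m ∈ ℕ, let U be an open subset of ℝ^m, let E : U → ℝ^m be Lipschitz continuous, λ ≥ 0 a constant and f : U → ℝ continuous. Let v : U → ℝ be upper semicontinuous and a viscosity subsolution of λv − E·Dv − f = 0 in U. Let c < d and let X : (c,d) → U be a C¹ curve with X′(t) = E(X(t)) for all t ∈ (c,d). Set w(t) = v(X(t)) and g(t) = f(X(t)) for t ∈ (c,d). Then w is a viscosity subsolution of λw − w′ − g = 0 in (c,d), i.e., for every C¹ function ψ on (c,d) and every t̂ ∈ (c,d) at which w − ψ attains a local maximum, λw(t̂) − ψ′(t̂) − g(t̂) ≤ 0. -/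
/-!
Doubling of variables. For large `N`, maximise
`(x, t) ↦ v x - ψ t - (t - t₀)² - N ‖x - X t‖²` over a compact neighbourhood of `(X t₀, t₀)`.
The extra term `(t - t₀)²` makes `(X t₀, t₀)` the strict maximiser among the points with
`x = X t`, so the maximisers `(x_N, t_N)` converge to it, with `N ‖x_N - X t_N‖² → 0` and,
by upper semicontinuity, `v x_N → v (X t₀)`. At `(x_N, t_N)` the subsolution inequality in `x`
and the first-order condition in `t` combine, through the one-sided Lipschitz bound
`⟪E x - E y, x - y⟫ ≤ K ‖x - y‖²`, into
`λ v x_N - ψ' t_N - f x_N ≤ 2 (t_N - t₀) + 2 K N ‖x_N - X t_N‖²`, whose right side tends to `0`.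
-/

open Filter Topology Set Metric

section Penalty

variable {α ι : Type*} [TopologicalSpace α] {K : Set α} {Φ P : α → ℝ} {q₀ : α}
  {l : Filter ι} {N : ι → ℝ} {p : ι → α}

theorem eq_of_mapClusterPt_of_penalized (hΦ : UpperSemicontinuousOn Φ K) (hP : ContinuousOn P K)
    (huniq : ∀ q ∈ K, P q = 0 → Φ q₀ ≤ Φ q → q = q₀) (hpK : ∀ᶠ i in l, p i ∈ K)
    (hPp : Tendsto (P ∘ p) l (𝓝 0)) (hΦp : ∀ᶠ i in l, Φ q₀ ≤ Φ (p i))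
    {q : α} (hqK : q ∈ K) (hq : MapClusterPt q l p) : q = q₀ := by
  -- `p` eventually lies in `K`, so `q` is also a cluster point of `p` along `𝓝[K] q`.
  have : (𝓝[K] q ⊓ map p l).NeBot := by
    rwa [nhdsWithin, inf_assoc, inf_of_le_right (tendsto_principal.2 hpK)]
  have hl'K : 𝓝[K] q ⊓ map p l ≤ 𝓝[K] q := inf_le_left
  have hl'p : 𝓝[K] q ⊓ map p l ≤ map p l := inf_le_right
  refine huniq q hqK (tendsto_nhds_unique ((hP q hqK).mono_left hl'K)
    ((tendsto_map'_iff.2 hPp).mono_left hl'p)) (le_of_forall_gt fun y hy => ?_)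
  have hΦp' : ∀ᶠ x in map p l, Φ q₀ ≤ Φ x := hΦp
  obtain ⟨x, hxy, hx⟩ := ((hΦ q hqK y hy).filter_mono hl'K |>.and (hΦp'.filter_mono hl'p)).exists
  exact hx.trans_lt hxy

theorem tendsto_of_penalized (hK : IsCompact K) (hΦ : UpperSemicontinuousOn Φ K)
    (hP : ContinuousOn P K) (hP0 : ∀ q ∈ K, 0 ≤ P q) (hq₀ : q₀ ∈ K)
    (huniq : ∀ q ∈ K, P q = 0 → Φ q₀ ≤ Φ q → q = q₀)
    (hN : Tendsto N l atTop) (hpK : ∀ᶠ i in l, p i ∈ K)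
    (hp : ∀ᶠ i in l, Φ q₀ ≤ Φ (p i) - N i * P (p i)) :
    Tendsto p l (𝓝 q₀) ∧ Tendsto (fun i => Φ (p i)) l (𝓝 (Φ q₀)) ∧
      Tendsto (fun i => N i * P (p i)) l (𝓝 0) := by
  obtain ⟨B, hB⟩ := hΦ.bddAbove_of_isCompact hK
  have hNP : ∀ᶠ i in l, 0 ≤ N i * P (p i) :=
    (hN.eventually_ge_atTop 0).and hpK |>.mono fun i hi => mul_nonneg hi.1 (hP0 _ hi.2)
  have hΦp : ∀ᶠ i in l, Φ q₀ ≤ Φ (p i) := by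
    filter_upwards [hp, hNP] with i hi hi' using by linarith
  have hPp : Tendsto (P ∘ p) l (𝓝 0) := by
    refine tendsto_of_tendsto_of_tendsto_of_le_of_le' tendsto_const_nhds
      ((tendsto_const_nhds (x := B - Φ q₀)).div_atTop hN) ?_ ?_
    · filter_upwards [hpK] with i hi using hP0 _ hi
    · filter_upwards [hp, hpK, hN.eventually_gt_atTop 0] with i hi hiK hNi
      rw [Function.comp_apply, le_div_iff₀ hNi]
      linarith [hB (mem_image_of_mem Φ hiK)]
  have hpq₀ : Tendsto p l (𝓝 q₀) := hK.tendsto_nhds_of_unique_mapClusterPt hpK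
    fun q hqK hq => eq_of_mapClusterPt_of_penalized hΦ hP huniq hpK hPp hΦp hqK hq
  have hΦq₀ : Tendsto (fun i => Φ (p i)) l (𝓝 (Φ q₀)) :=
    tendsto_order.2 ⟨fun y hy => hΦp.mono fun i hi => hy.trans_le hi,
      fun y hy => (tendsto_nhdsWithin_iff.2 ⟨hpq₀, hpK⟩).eventually (hΦ q₀ hq₀ y hy)⟩
  refine ⟨hpq₀, hΦq₀, tendsto_of_tendsto_of_tendsto_of_le_of_le' tendsto_const_nhds
    (by simpa using hΦq₀.sub_const (Φ q₀)) hNP ?_⟩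
  filter_upwards [hp] with i hi using by linarith

end Penalty

section Calculus

variable {F : Type*} [NormedAddCommGroup F] [InnerProductSpace ℝ F]

theorem hasGradientAt_const_mul_norm_sub_sq [CompleteSpace F] (N : ℝ) (a x : F) :
    HasGradientAt (fun y => N * ‖y - a‖ ^ 2) ((2 * N) • (x - a)) x := by
  rw [hasGradientAt_iff_hasFDerivAt]
  refine (((hasFDerivAt_id x).sub_const a).norm_sq.const_mul N).congr_fderiv ?_
  ext y
  simp only [id_eq, map_sub, ContinuousLinearMap.comp_id, smul_apply, sub_apply,
    coe_innerSL_apply, nsmul_eq_mul, Nat.cast_ofNat, smul_eq_mul, map_smul,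
    InnerProductSpace.toDual_apply_apply]
  ring

theorem IsLocalMax.hasDerivAt_penalty_eq {ψ : ℝ → ℝ} {X : ℝ → F} {ψ' N s t₀ : ℝ} {x e : F}
    (hψ : HasDerivAt ψ ψ' s) (hX : HasDerivAt X e s)
    (hmax : IsLocalMax (fun t => -ψ t - (t - t₀) ^ 2 - N * ‖x - X t‖ ^ 2) s) :
    ψ' + 2 * (s - t₀) = 2 * N * inner ℝ (x - X s) e := by
  have hpen : HasDerivAt (fun t : ℝ => (t - t₀) ^ 2) (2 * (s - t₀)) s := by
    simpa using ((hasDerivAt_id s).sub_const t₀).fun_pow 2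
  have := hmax.hasDerivAt_eq_zero
    ((hψ.neg.sub hpen).sub (((hX.const_sub x).norm_sq).const_mul N))
  rw [inner_neg_right] at this
  linarith

theorem LipschitzOnWith.inner_sub_le {K : NNReal} {E : F → F} {U : Set F}
    (hE : LipschitzOnWith K E U) {x y : F} (hx : x ∈ U) (hy : y ∈ U) :
    inner ℝ (E x - E y) (x - y) ≤ K * ‖x - y‖ ^ 2 :=
  calc inner ℝ (E x - E y) (x - y) ≤ ‖E x - E y‖ * ‖x - y‖ := real_inner_le_norm _ _
    _ ≤ K * ‖x - y‖ * ‖x - y‖ := by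
      gcongr
      simpa only [dist_eq_norm] using hE.dist_le_mul x hx y hy
    _ = K * ‖x - y‖ ^ 2 := by ring

end Calculus

section Doubling

variable {F : Type*} [NormedAddCommGroup F]

def doubling (v : F → ℝ) (ψ : ℝ → ℝ) (X : ℝ → F) (t₀ N : ℝ) (q : F × ℝ) : ℝ :=
  v q.1 - ψ q.2 - (q.2 - t₀) ^ 2 - N * ‖q.1 - X q.2‖ ^ 2

theorem exists_seq_isMaxOn_doubling [ProperSpace F] {v : F → ℝ} {ψ : ℝ → ℝ} {X : ℝ → F}
    {t₀ r δ : ℝ} (hr : 0 ≤ r) (hδ : 0 ≤ δ) (hv : UpperSemicontinuousOn v (closedBall (X t₀) r))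
    (hψ : ContinuousOn ψ (closedBall t₀ δ)) (hX : ContinuousOn X (closedBall t₀ δ))
    (hmax : ∀ t ∈ closedBall t₀ δ, v (X t) - ψ t ≤ v (X t₀) - ψ t₀) :
    ∃ p : ℕ → F × ℝ,
      (∀ n : ℕ, IsMaxOn (doubling v ψ X t₀ n) (closedBall (X t₀) r ×ˢ closedBall t₀ δ) (p n)) ∧
      Tendsto p atTop (𝓝 (X t₀, t₀)) ∧ Tendsto (fun n => v (p n).1) atTop (𝓝 (v (X t₀))) ∧
      Tendsto (fun n : ℕ => n * ‖(p n).1 - X (p n).2‖ ^ 2) atTop (𝓝 0) := by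
  set S := closedBall (X t₀) r ×ˢ closedBall t₀ δ
  have hS : IsCompact S := (isCompact_closedBall _ _).prod (isCompact_closedBall _ _)
  have hq₀ : (X t₀, t₀) ∈ S := ⟨mem_closedBall_self hr, mem_closedBall_self hδ⟩
  set P : F × ℝ → ℝ := fun q => ‖q.1 - X q.2‖ ^ 2
  have hP : ContinuousOn P S :=
    ((continuousOn_fst.sub (hX.comp continuousOn_snd fun q hq => hq.2)).norm).pow 2
  have hψS : ContinuousOn (fun q : F × ℝ => ψ q.2) S :=
    hψ.comp continuousOn_snd fun q hq => hq.2
  have husc (N : ℝ) : UpperSemicontinuousOn (doubling v ψ X t₀ N) S := by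
    have h : doubling v ψ X t₀ N = fun q => v q.1 + (-ψ q.2 - (q.2 - t₀) ^ 2 - N * P q) := by
      funext q
      simp only [doubling, P]
      ring
    rw [h]
    exact (hv.comp continuousOn_fst fun q hq => hq.1).add
      ((hψS.neg.sub (by fun_prop)).sub (continuousOn_const.mul hP)).upperSemicontinuousOn
  have huniq : ∀ q ∈ S, P q = 0 → doubling v ψ X t₀ 0 (X t₀, t₀) ≤ doubling v ψ X t₀ 0 q →
      q = (X t₀, t₀) := by
    rintro ⟨x, t⟩ ⟨-, ht⟩ hPq hΦq
    obtain rfl : x = X t := by simpa [P, sub_eq_zero] using hPq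
    have := hmax t ht
    simp only [doubling, zero_mul, sub_zero, sub_self] at hΦq
    obtain rfl : t = t₀ := by nlinarith
    rfl
  choose p hpS hpmax using fun n : ℕ => (husc n).exists_isMaxOn ⟨_, hq₀⟩ hS
  obtain ⟨hpq₀, hΦp, hNP⟩ := tendsto_of_penalized hS (husc 0) hP (fun _ _ => by positivity) hq₀
    huniq tendsto_natCast_atTop_atTop (.of_forall hpS) (.of_forall fun n => by
      simpa [doubling, P] using hpmax n hq₀)
  refine ⟨p, hpmax, hpq₀, ?_, hNP⟩
  have hψp : Tendsto (fun n => ψ (p n).2) atTop (𝓝 (ψ t₀)) :=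
    (hψS _ hq₀).tendsto.comp (tendsto_nhdsWithin_iff.2 ⟨hpq₀, .of_forall hpS⟩)
  have hsp : Tendsto (fun n => (p n).2) atTop (𝓝 t₀) := (continuous_snd.tendsto _).comp hpq₀
  convert (hΦp.add hψp).add ((hsp.sub_const t₀).pow 2) using 2
  · simp only [doubling, zero_mul, sub_zero]
    ring
  · simp [doubling]

end Doubling

section Viscosity

variable {F : Type*} [NormedAddCommGroup F] [InnerProductSpace ℝ F] [CompleteSpace F]

def IsViscositySubsolution (lam : ℝ) (E : F → F) (f v : F → ℝ) (U : Set F) : Prop :=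
  ∀ φ : F → ℝ, ContDiff ℝ 1 φ → ∀ z ∈ U, IsLocalMaxOn (fun x => v x - φ x) U z →
    lam * v z - inner ℝ (E z) (gradient φ z) - f z ≤ 0

variable {lam : ℝ} {E : F → F} {f v : F → ℝ} {U : Set F}

theorem IsViscositySubsolution.le_of_isLocalMaxOn_sub_sq (hv : IsViscositySubsolution lam E f v U)
    {N : ℝ} {a x : F} (hx : x ∈ U) (hmax : IsLocalMaxOn (fun y => v y - N * ‖y - a‖ ^ 2) U x) :
    lam * v x - 2 * N * inner ℝ (E x) (x - a) - f x ≤ 0 := by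
  have := hv (fun y => N * ‖y - a‖ ^ 2)
    (contDiff_const.mul ((contDiff_id.sub contDiff_const).norm_sq ℝ)) x hx hmax
  rwa [(hasGradientAt_const_mul_norm_sub_sq N a x).gradient, real_inner_smul_right] at this

theorem IsViscositySubsolution.le_of_isLocalMax_doubling (hv : IsViscositySubsolution lam E f v U)
    {K : NNReal} (hE : LipschitzOnWith K E U) {ψ : ℝ → ℝ} {X : ℝ → F} {ψ' N s t₀ : ℝ} {x : F}
    (hx : x ∈ U) (hXs : X s ∈ U) (hN : 0 ≤ N) (hψ : HasDerivAt ψ ψ' s)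
    (hX : HasDerivAt X (E (X s)) s) (hmax : IsLocalMax (doubling v ψ X t₀ N) (x, s)) :
    lam * v x - ψ' - f x ≤ 2 * (s - t₀) + 2 * K * (N * ‖x - X s‖ ^ 2) := by
  have hmax_x : IsLocalMaxOn (fun y => v y - N * ‖y - X s‖ ^ 2) U x := by
    refine IsLocalMax.on ?_ U
    filter_upwards [hmax.comp_continuous (g := fun y => (y, s)) (by fun_prop)] with y hy
    simp only [Function.comp_apply, doubling] at hy
    linarith
  have hmax_s : IsLocalMax (fun t => -ψ t - (t - t₀) ^ 2 - N * ‖x - X t‖ ^ 2) s := by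
    filter_upwards [hmax.comp_continuous (g := fun t => (x, t)) (by fun_prop)] with t ht
    simp only [Function.comp_apply, doubling] at ht
    linarith
  have h1 := hv.le_of_isLocalMaxOn_sub_sq hx hmax_x
  have h2 := hmax_s.hasDerivAt_penalty_eq hψ hX
  have h3 := mul_le_mul_of_nonneg_left (hE.inner_sub_le hx hXs) (by positivity : 0 ≤ 2 * N)
  rw [inner_sub_left] at h3
  rw [real_inner_comm] at h2
  linarith

end Viscosity

theorem composition_is_subsolution_general
    (m : ℕ) (U : Set (EuclideanSpace ℝ (Fin m))) (hU : IsOpen U)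
    (E : EuclideanSpace ℝ (Fin m) → EuclideanSpace ℝ (Fin m))
    (hE : ∃ K : NNReal, LipschitzOnWith K E U)
    (lam : ℝ)
    (f : EuclideanSpace ℝ (Fin m) → ℝ) (hf : ContinuousOn f U)
    (v : EuclideanSpace ℝ (Fin m) → ℝ) (hv : UpperSemicontinuousOn v U)
    (hvsub : ∀ φ : EuclideanSpace ℝ (Fin m) → ℝ, ContDiff ℝ 1 φ → ∀ z ∈ U,
      IsLocalMaxOn (fun x => v x - φ x) U z →
      lam * v z - (inner ℝ (E z) (gradient φ z) : ℝ) - f z ≤ 0)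
    (c d : ℝ)
    (X : ℝ → EuclideanSpace ℝ (Fin m))
    (hXU : ∀ t ∈ Ioo c d, X t ∈ U)
    (hX : ∀ t ∈ Ioo c d, HasDerivAt X (E (X t)) t) :
    ∀ ψ : ℝ → ℝ, ContDiff ℝ 1 ψ → ∀ t₀ ∈ Ioo c d,
      IsLocalMaxOn (fun t => v (X t) - ψ t) (Ioo c d) t₀ →
      lam * v (X t₀) - deriv ψ t₀ - f (X t₀) ≤ 0 := by
  intro ψ hψ t₀ ht₀ hmax
  obtain ⟨K, hK⟩ := hE
  obtain ⟨r, hr, hrU⟩ := nhds_basis_closedBall.mem_iff.1 (hU.mem_nhds (hXU t₀ ht₀))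
  obtain ⟨δ, hδ, hδI⟩ := nhds_basis_closedBall.mem_iff.1 (inter_mem (isOpen_Ioo.mem_nhds ht₀)
    (hmax.isLocalMax (isOpen_Ioo.mem_nhds ht₀)))
  obtain ⟨p, hpmax, hpt, hvp, hNP⟩ := exists_seq_isMaxOn_doubling hr.le hδ.le
    (hv.mono hrU) hψ.continuous.continuousOn
    (fun t ht => (hX t (hδI ht).1).continuousAt.continuousWithinAt) fun t ht => (hδI ht).2
  have hS : ball (X t₀) r ×ˢ ball t₀ δ ∈ 𝓝 (X t₀, t₀) :=
    prod_mem_nhds (ball_mem_nhds _ hr) (ball_mem_nhds _ hδ)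
  have hineq : ∀ᶠ n : ℕ in atTop, lam * v (p n).1 - deriv ψ (p n).2 - f (p n).1 ≤
      2 * ((p n).2 - t₀) + 2 * K * (n * ‖(p n).1 - X (p n).2‖ ^ 2) := by
    filter_upwards [hpt.eventually_mem hS] with n ⟨hx, hs⟩
    exact IsViscositySubsolution.le_of_isLocalMax_doubling hvsub hK
      (hrU (ball_subset_closedBall hx)) (hXU _ (hδI (ball_subset_closedBall hs)).1) n.cast_nonneg
      (hψ.differentiable one_ne_zero).differentiableAt.hasDerivAt
      (hX _ (hδI (ball_subset_closedBall hs)).1)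
      ((hpmax n).isLocalMax (prod_mem_nhds (closedBall_mem_nhds_of_mem hx)
        (closedBall_mem_nhds_of_mem hs)))
  have hsp : Tendsto (fun n => (p n).2) atTop (𝓝 t₀) := (continuous_snd.tendsto _).comp hpt
  have hxp : Tendsto (fun n => (p n).1) atTop (𝓝[U] X t₀) :=
    tendsto_nhdsWithin_iff.2 ⟨(continuous_fst.tendsto _).comp hpt,
      (hpt.eventually_mem hS).mono fun n hn => hrU (ball_subset_closedBall hn.1)⟩
  refine le_of_tendsto_of_tendsto (((hvp.const_mul lam).sub
    (((hψ.continuous_deriv le_rfl).tendsto t₀).comp hsp)).sub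
    ((hf _ (hXU t₀ ht₀)).tendsto.comp hxp)) ?_ hineq
  simpa using ((hsp.sub_const t₀).const_mul 2).add (hNP.const_mul (2 * (K : ℝ)))

/-- If `v` is an upper semicontinuous viscosity subsolution of
`λ v − E·Dv − f = 0` in the open set `U ⊂ ℝ^m` and `X : (c,d) → U` is a C¹ solution of
`X′ = E(X)`, then `w(t) = v(X(t))` is a viscosity subsolution of `λ w − w′ − g = 0` in
`(c,d)`, where `g(t) = f(X(t))`. -/
theorem composition_is_subsolution
    (m : ℕ) (U : Set (EuclideanSpace ℝ (Fin m))) (hU : IsOpen U)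
    (E : EuclideanSpace ℝ (Fin m) → EuclideanSpace ℝ (Fin m))
    (hE : ∃ K : NNReal, LipschitzOnWith K E U)
    (lam : ℝ) (hlam : 0 ≤ lam)
    (f : EuclideanSpace ℝ (Fin m) → ℝ) (hf : ContinuousOn f U)
    (v : EuclideanSpace ℝ (Fin m) → ℝ) (hv : UpperSemicontinuousOn v U)
    (hvsub : ∀ φ : EuclideanSpace ℝ (Fin m) → ℝ, ContDiff ℝ 1 φ → ∀ z ∈ U,
      IsLocalMaxOn (fun x => v x - φ x) U z →
      lam * v z - (inner ℝ (E z) (gradient φ z) : ℝ) - f z ≤ 0)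
    (c d : ℝ) (hcd : c < d)
    (X : ℝ → EuclideanSpace ℝ (Fin m))
    (hXU : ∀ t ∈ Ioo c d, X t ∈ U)
    (hX : ∀ t ∈ Ioo c d, HasDerivAt X (E (X t)) t) :
    ∀ ψ : ℝ → ℝ, ContDiff ℝ 1 ψ → ∀ t₀ ∈ Ioo c d,
      IsLocalMaxOn (fun t => v (X t) - ψ t) (Ioo c d) t₀ →
      lam * v (X t₀) - deriv ψ t₀ - f (X t₀) ≤ 0 :=
  composition_is_subsolution_general m U hU E hE lam f hf v hv hvsub c d X hXU hX
end

section
/- Let H : ℝ² → ℝ be of class C² with H(0) = 0 and DH(0) = 0. Suppose there exist constants m ≥ 0, n > 0 with n < m + 2, constants A₁, A₂ > 0, and R > 0 such that for all x ∈ B_R(0): |∂²H/∂x_i∂x_j (x)| ≤ A₁ |x|^m for i, j ∈ {1,2}, and |DH(x)| ≥ A₂ |x|^n. Let Ω ⊂ ℝ² be open and bounded with 0 ∈ Ω and DH(x) ≠ 0 for every x ∈ cl(Ω) \ {0}. Then there exists a constant A₀ > 0 such that |DH(x)| ≥ A₀ |H(x)|^{n/(m+2)} for all x ∈ cl(Ω).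 -/
/-!
Integrating the Hessian bound twice along segments from the critical point gives
`|DH(x)| ≤ C|x|^(m+1)` and `|H(x)| ≤ C|x|^(m+2)` near `0`, so `|H|^(n/(m+2)) ≤ C'|x|^n ≤ C''|DH|`
on a small ball. On the rest of the compact set `cl Ω`, `|DH|` is bounded below by a positive
constant and `|H|` is bounded above, which gives the estimate there.
-/

open Filter Topology Set Metric Bornology

theorem EuclideanSpace.opNorm_le_card_mul {ι G : Type*} [Fintype ι] [DecidableEq ι]
    [SeminormedAddCommGroup G] [NormedSpace ℝ G] (L : EuclideanSpace ℝ ι →L[ℝ] G) {c : ℝ}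
    (hc : 0 ≤ c) (h : ∀ i, ‖L (EuclideanSpace.single i 1)‖ ≤ c) :
    ‖L‖ ≤ Fintype.card ι * c := by
  refine L.opNorm_le_bound (by positivity) fun u => ?_
  calc ‖L u‖ = ‖∑ i, u i • L (EuclideanSpace.single i 1)‖ := by
        conv_lhs => rw [← (EuclideanSpace.basisFun ι ℝ).sum_repr u]
        simp
    _ ≤ ∑ _i : ι, ‖u‖ * c := by
        refine norm_sum_le_of_le _ fun i _ => ?_
        rw [norm_smul]
        exact mul_le_mul (PiLp.norm_apply_le u i) (h i) (norm_nonneg _) (norm_nonneg _)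
    _ = Fintype.card ι * c * ‖u‖ := by
        rw [Finset.sum_const, Finset.card_univ, nsmul_eq_mul]; ring

theorem fderiv_clm_apply_const {E F G : Type*} [NormedAddCommGroup E] [NormedSpace ℝ E]
    [NormedAddCommGroup F] [NormedSpace ℝ F] [NormedAddCommGroup G] [NormedSpace ℝ G]
    {f : E → F →L[ℝ] G} {x : E} (hf : DifferentiableAt ℝ f x) (v : F) (w : E) :
    fderiv ℝ (fun y => f y v) x w = fderiv ℝ f x w v := by
  rw [fderiv_clm_apply hf (differentiableAt_const v)]
  simp

theorem norm_fderiv_le_of_norm_partial_le {ι κ G : Type*} [Fintype ι] [DecidableEq ι]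
    [Fintype κ] [DecidableEq κ] [NormedAddCommGroup G] [NormedSpace ℝ G]
    {f : EuclideanSpace ℝ ι → EuclideanSpace ℝ κ →L[ℝ] G} {x : EuclideanSpace ℝ ι}
    (hf : DifferentiableAt ℝ f x) {c : ℝ} (hc : 0 ≤ c)
    (h : ∀ i j, ‖fderiv ℝ (fun y => f y (EuclideanSpace.single j 1)) x
      (EuclideanSpace.single i 1)‖ ≤ c) :
    ‖fderiv ℝ f x‖ ≤ Fintype.card ι * (Fintype.card κ * c) :=
  EuclideanSpace.opNorm_le_card_mul _ (by positivity) fun i =>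
    EuclideanSpace.opNorm_le_card_mul _ hc fun j => by
      simpa only [fderiv_clm_apply_const hf] using h i j

theorem norm_le_mul_rpow_add_one_of_norm_fderiv_le {E F : Type*} [NormedAddCommGroup E]
    [NormedSpace ℝ E] [NormedAddCommGroup F] [NormedSpace ℝ F] {f : E → F} {C p R : ℝ}
    (hC : 0 ≤ C) (hp : 0 ≤ p) (hf0 : f 0 = 0) (hf : DifferentiableOn ℝ f (ball 0 R))
    (hbound : ∀ y ∈ ball (0 : E) R, ‖fderiv ℝ f y‖ ≤ C * ‖y‖ ^ p) {x : E} (hx : x ∈ ball 0 R) :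
    ‖f x‖ ≤ C * ‖x‖ ^ (p + 1) := by
  have hsub : closedBall (0 : E) ‖x‖ ⊆ ball 0 R := closedBall_subset_ball (mem_ball_zero_iff.1 hx)
  have hbound' : ∀ y ∈ closedBall (0 : E) ‖x‖, ‖fderiv ℝ f y‖ ≤ C * ‖x‖ ^ p := fun y hy =>
    (hbound y (hsub hy)).trans <| by
      gcongr
      exact mem_closedBall_zero_iff.1 hy
  have hmvt := (convex_closedBall (0 : E) ‖x‖).norm_image_sub_le_of_norm_fderiv_le
    (fun y hy => hf.differentiableAt (isOpen_ball.mem_nhds (hsub hy))) hbound'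
    (mem_closedBall_self (norm_nonneg x)) (mem_closedBall_zero_iff.2 le_rfl)
  rw [hf0, sub_zero, sub_zero] at hmvt
  rwa [Real.rpow_add_one' (norm_nonneg x) (by positivity), ← mul_assoc]

theorem abs_le_mul_rpow_add_two_of_norm_fderiv_fderiv_le {E : Type*} [NormedAddCommGroup E]
    [NormedSpace ℝ E] {H : E → ℝ} {C m R : ℝ} (hC : 0 ≤ C) (hm : 0 ≤ m)
    (hH : ContDiffOn ℝ 2 H (ball 0 R)) (hH0 : H 0 = 0) (hDH0 : fderiv ℝ H 0 = 0)
    (hD2H : ∀ y ∈ ball (0 : E) R, ‖fderiv ℝ (fderiv ℝ H) y‖ ≤ C * ‖y‖ ^ m)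
    {x : E} (hx : x ∈ ball 0 R) :
    |H x| ≤ C * ‖x‖ ^ (m + 2) := by
  have hDH : ∀ y ∈ ball (0 : E) R, ‖fderiv ℝ H y‖ ≤ C * ‖y‖ ^ (m + 1) := fun y hy =>
    norm_le_mul_rpow_add_one_of_norm_fderiv_le hC hm hDH0
      ((hH.fderiv_of_isOpen isOpen_ball (m := 1) (by norm_num)).differentiableOn (by norm_num))
      hD2H hy
  have := norm_le_mul_rpow_add_one_of_norm_fderiv_le hC (by positivity) hH0
    (hH.differentiableOn (by norm_num)) hDH hx
  rwa [add_assoc, one_add_one_eq_two] at this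

theorem rpow_div_le_mul_rpow {h K r p n : ℝ} (hh : 0 ≤ h) (hK : 0 ≤ K) (hr : 0 ≤ r)
    (hp : 0 < p) (hn : 0 ≤ n) (hle : h ≤ K * r ^ p) : h ^ (n / p) ≤ K ^ (n / p) * r ^ n := by
  calc h ^ (n / p) ≤ (K * r ^ p) ^ (n / p) := by gcongr
    _ = K ^ (n / p) * r ^ n := by
      rw [Real.mul_rpow hK (by positivity), ← Real.rpow_mul hr, mul_div_cancel₀ n hp.ne']

theorem IsCompact.exists_pos_mul_le {X : Type*} [TopologicalSpace X] {K U : Set X}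
    (hK : IsCompact K) (hU : IsOpen U) {f g : X → ℝ} (hf : ContinuousOn f K)
    (hg : ContinuousOn g K) (hf0 : ∀ x ∈ K, 0 ≤ f x) {c : ℝ} (hc : 0 < c)
    (hle : ∀ x ∈ K ∩ U, c * f x ≤ g x) (hg_pos : ∀ x ∈ K \ U, 0 < g x) :
    ∃ A > 0, ∀ x ∈ K, A * f x ≤ g x := by
  obtain ⟨ε, hε, hεg⟩ := (hK.diff hU).exists_forall_le' (hg.mono sdiff_subset) hg_pos
  obtain ⟨M, hM⟩ := hK.exists_bound_of_continuousOn hf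
  refine ⟨min c (ε / (|M| + 1)), by positivity, fun x hx => ?_⟩
  by_cases hxU : x ∈ U
  · exact (mul_le_mul_of_nonneg_right (min_le_left _ _) (hf0 x hx)).trans (hle x ⟨hx, hxU⟩)
  · have hfM : f x ≤ |M| + 1 := by
      have := hM x hx
      rw [Real.norm_of_nonneg (hf0 x hx)] at this
      linarith [le_abs_self M]
    calc min c (ε / (|M| + 1)) * f x ≤ ε / (|M| + 1) * (|M| + 1) := by
          gcongr
          · exact hf0 x hx
          · exact min_le_right _ _
      _ = ε := div_mul_cancel₀ ε (by positivity)
      _ ≤ g x := hεg x ⟨hx, hxU⟩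

theorem gradient_lower_bound_by_H_general
    (H : E2 → ℝ) (hH : ContDiff ℝ 2 H) (hH0 : H 0 = 0) (hDH0 : gradient H 0 = 0)
    (m n A₁ A₂ R : ℝ) (hm : 0 ≤ m) (hn : 0 < n)
    (hA₁ : 0 < A₁) (hA₂ : 0 < A₂) (hR : 0 < R)
    (hHess : ∀ x ∈ ball (0 : E2) R, ∀ i j : Fin 2,
      |fderiv ℝ (fun y => fderiv ℝ H y (EuclideanSpace.single j 1)) x
        (EuclideanSpace.single i 1)| ≤ A₁ * ‖x‖ ^ m)
    (hgrad : ∀ x ∈ ball (0 : E2) R, A₂ * ‖x‖ ^ n ≤ ‖gradient H x‖)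
    (Ω : Set E2) (hΩbdd : IsBounded Ω)
    (hcrit : ∀ x ∈ closure Ω, x ≠ 0 → gradient H x ≠ 0) :
    ∃ A₀ : ℝ, 0 < A₀ ∧ ∀ x ∈ closure Ω,
      A₀ * |H x| ^ (n / (m + 2)) ≤ ‖gradient H x‖ := by
  have hDH : Differentiable ℝ (fderiv ℝ H) :=
    (hH.fderiv_right (m := 1) (by norm_num)).differentiable (by norm_num)
  have hD2H : ∀ x ∈ ball (0 : E2) R, ‖fderiv ℝ (fderiv ℝ H) x‖ ≤ 4 * A₁ * ‖x‖ ^ m :=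
    fun x hx => (norm_fderiv_le_of_norm_partial_le (hDH x) (by positivity) (hHess x hx)).trans_eq
      (by simp only [Fintype.card_fin, Nat.cast_ofNat]; ring)
  have hHx : ∀ x ∈ ball (0 : E2) R, |H x| ≤ 4 * A₁ * ‖x‖ ^ (m + 2) :=
    fun x => abs_le_mul_rpow_add_two_of_norm_fderiv_fderiv_le (by positivity) hm hH.contDiffOn hH0
      ((InnerProductSpace.toDual ℝ E2).symm.map_eq_zero_iff.1 hDH0) hD2H
  have hlocal : ∀ x ∈ closure Ω ∩ ball (0 : E2) R,
      A₂ / (4 * A₁) ^ (n / (m + 2)) * |H x| ^ (n / (m + 2)) ≤ ‖gradient H x‖ := by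
    rintro x ⟨-, hx⟩
    calc A₂ / (4 * A₁) ^ (n / (m + 2)) * |H x| ^ (n / (m + 2))
        ≤ A₂ / (4 * A₁) ^ (n / (m + 2)) * ((4 * A₁) ^ (n / (m + 2)) * ‖x‖ ^ n) := by
          gcongr
          exact rpow_div_le_mul_rpow (abs_nonneg _) (by positivity) (norm_nonneg x)
            (by positivity) hn.le (hHx x hx)
      _ = A₂ * ‖x‖ ^ n := by field_simp
      _ ≤ ‖gradient H x‖ := hgrad x hx
  refine hΩbdd.isCompact_closure.exists_pos_mul_le isOpen_ball ?_ ?_ (fun _ _ => by positivity)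
    (by positivity) hlocal fun x hx => norm_pos_iff.2 (hcrit x hx.1 ?_)
  · exact (hH.continuous.abs.rpow_const fun _ => Or.inr (by positivity)).continuousOn
  · exact ((InnerProductSpace.toDual ℝ E2).symm.continuous.comp
      (hH.continuous_fderiv (by norm_num))).norm.continuousOn
  · rintro rfl
    exact hx.2 (mem_ball_self hR)

/-- Under the degeneracy conditions (H3) at the critical point `0`
(`|H_{x_i x_j}(x)| ≤ A₁|x|^m` and `|DH(x)| ≥ A₂|x|^n` near `0`, with `n < m + 2`),
and assuming `DH ≠ 0` away from `0` on `cl Ω`, there is a constant `A₀ > 0` with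
`|DH(x)| ≥ A₀ |H(x)|^{n/(m+2)}` on `cl Ω`. -/
theorem gradient_lower_bound_by_H
    (H : E2 → ℝ) (hH : ContDiff ℝ 2 H) (hH0 : H 0 = 0) (hDH0 : gradient H 0 = 0)
    (m n A₁ A₂ R : ℝ) (hm : 0 ≤ m) (hn : 0 < n) (hnm : n < m + 2)
    (hA₁ : 0 < A₁) (hA₂ : 0 < A₂) (hR : 0 < R)
    (hHess : ∀ x ∈ ball (0 : E2) R, ∀ i j : Fin 2,
      |fderiv ℝ (fun y => fderiv ℝ H y (EuclideanSpace.single j 1)) x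
        (EuclideanSpace.single i 1)| ≤ A₁ * ‖x‖ ^ m)
    (hgrad : ∀ x ∈ ball (0 : E2) R, A₂ * ‖x‖ ^ n ≤ ‖gradient H x‖)
    (Ω : Set E2) (hΩopen : IsOpen Ω) (hΩbdd : IsBounded Ω) (h0Ω : (0 : E2) ∈ Ω)
    (hcrit : ∀ x ∈ closure Ω, x ≠ 0 → gradient H x ≠ 0) :
    ∃ A₀ : ℝ, 0 < A₀ ∧ ∀ x ∈ closure Ω,
      A₀ * |H x| ^ (n / (m + 2)) ≤ ‖gradient H x‖ :=
  gradient_lower_bound_by_H_general H hH hH0 hDH0 m n A₁ A₂ R hm hn hA₁ hA₂ hR hHess hgrad Ω hΩbdd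
    hcrit
end

section
/- Let H : ℝ² → ℝ be of class C² with H(0) = 0. Let R > 0, A₀ > 0 and α ∈ (0,1), and assume that |DH(x)| ≥ A₀ |H(x)|^α for all x in the closed ball cl(B_R(0)), and that for every s ∈ (0, R) there exists x with |x| ≤ s and H(x) > 0. For r ∈ (0, R) define m_H(r) = max{H(x) : |x| ≤ r}. Then m_H is increasing on (0,R), for all 0 < s < r < R one has m_H(r)^{1−α} − m_H(s)^{1−α} ≥ (1−α) A₀ (r − s), and consequently m_H(r) ≥ A₃ r^ρ for all r ∈ (0, R), where ρ = 1/(1−α) > 1 and A₃ = ((1−α)A₀)^{1/(1−α)}. -/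
/-!
If `x₀` is a point of the closed ball of radius `r` where `H` attains `m_H(r)`, then moving from
`x₀` a distance `t` in the direction of `∇H(x₀)` stays in the ball of radius `r + t`. Hence the
lower right Dini derivative of `m_H` at `r` is at least `|∇H(x₀)| ≥ A₀ m_H(r)^α`, and that of
`m_H^{1-α}` is at least `(1-α) A₀`. A fencing argument integrates this to the difference
inequality; the power lower bound follows by letting `s → 0`, since `m_H(s)^{1-α} ≥ 0`.
-/

open Filter Topology Set Metric

noncomputable section

/-- `m_H(r) = max { H(x) : |x| ≤ r }`. -/
def mH (H : E2 → ℝ) (r : ℝ) : ℝ := sSup (H '' closedBall (0 : E2) r)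

theorem sub_le_of_forall_eventually_lt_slope {f : ℝ → ℝ} {a b c : ℝ} (hab : a ≤ b)
    (hf : ContinuousOn f (Icc a b))
    (hslope : ∀ x ∈ Ico a b, ∀ q < c, ∀ᶠ z in 𝓝[>] x, q < slope f x z) :
    c * (b - a) ≤ f b - f a := by
  have := image_le_of_liminf_slope_right_le_deriv_boundary (f := fun t => -f t)
    (B := fun t => -f a - c * (t - a)) (B' := fun _ => -c) hf.neg (by simp) (by fun_prop)
    (fun x _ => by simpa using (((hasDerivWithinAt_id x _).sub_const a).const_mul c).const_sub _)
    (fun x hx q hq => (hslope x hx (-q) (by linarith)).frequently.mono fun z hz => by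
      rw [slope_neg]; linarith)
    (right_mem_Icc.2 hab)
  linarith

theorem HasGradientAt.hasDerivAt_along_gradient {F : Type*} [NormedAddCommGroup F]
    [InnerProductSpace ℝ F] [CompleteSpace F] {f : F → ℝ} {g x₀ : F} (hf : HasGradientAt f g x₀) :
    HasDerivAt (fun t : ℝ => f (x₀ + t • (‖g‖⁻¹ • g))) ‖g‖ 0 := by
  have hline := ((hasDerivAt_id (0 : ℝ)).smul_const (‖g‖⁻¹ • g)).const_add x₀
  have hf' : HasFDerivAt f (InnerProductSpace.toDual ℝ F g) (x₀ + id (0 : ℝ) • (‖g‖⁻¹ • g)) := by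
    simpa using hf.hasFDerivAt
  refine (hf'.comp_hasDerivAt (0 : ℝ) hline).congr_deriv ?_
  rcases eq_or_ne g 0 with rfl | hg
  · simp
  · simp [sq, hg]

section MaxOnBall

variable (H : E2 → ℝ)

theorem mH_eq_sSup_image_smul {r : ℝ} (hr : 0 ≤ r) :
    mH H r = sSup ((fun y => H (r • y)) '' closedBall (0 : E2) 1) := by
  rw [mH, ← image_image (g := H) (f := (r • ·)), image_smul, _root_.smul_closedBall _ _ zero_le_one]
  simp [abs_of_nonneg hr]

variable {H}

theorem continuousOn_mH (hc : Continuous H) : ContinuousOn (mH H) (Ici 0) :=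
  ((isCompact_closedBall (0 : E2) 1).continuous_sSup (f := fun r y => H (r • y))
    (by fun_prop)).continuousOn.congr fun _ hr => mH_eq_sSup_image_smul H hr

theorem le_mH (hc : Continuous H) {r : ℝ} {x : E2} (hx : ‖x‖ ≤ r) : H x ≤ mH H r :=
  le_csSup ((isCompact_closedBall _ r).image hc).bddAbove
    (mem_image_of_mem _ (mem_closedBall_zero_iff.2 hx))

theorem exists_eq_mH (hc : Continuous H) {r : ℝ} (hr : 0 ≤ r) :
    ∃ x₀ ∈ closedBall (0 : E2) r, H x₀ = mH H r := by
  obtain ⟨x₀, hx₀, h⟩ := (isCompact_closedBall (0 : E2) r).exists_sSup_image_eq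
    ⟨0, mem_closedBall_self hr⟩ hc.continuousOn
  exact ⟨x₀, hx₀, h.symm⟩

theorem eventually_lt_slope_rpow_mH (hc : Continuous H) {x p q : ℝ} {x₀ : E2}
    (hx₀ : ‖x₀‖ ≤ x) (hmax : H x₀ = mH H x) (hM : 0 < mH H x) (hd : DifferentiableAt ℝ H x₀)
    (hp : 0 ≤ p) (hq : q < p * mH H x ^ (p - 1) * ‖gradient H x₀‖) :
    ∀ᶠ z in 𝓝[>] x, q < slope (fun t => mH H t ^ p) x z := by
  set u : E2 := ‖gradient H x₀‖⁻¹ • gradient H x₀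
  set ψ : ℝ → ℝ := fun z => H (x₀ + (z - x) • u) ^ p
  have hray_x : H (x₀ + (x - x) • u) = mH H x := by simpa using hmax
  have hray_pos : 0 < H (x₀ + (x - x) • u) := hray_x ▸ hM
  have hray : HasDerivAt (fun z => H (x₀ + (z - x) • u)) ‖gradient H x₀‖ x :=
    HasDerivAt.comp_sub_const x x (by simpa using hd.hasGradientAt.hasDerivAt_along_gradient)
  have hψ : HasDerivAt ψ (p * mH H x ^ (p - 1) * ‖gradient H x₀‖) x := by
    convert hray.rpow_const (p := p) (Or.inl hray_pos.ne') using 1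
    rw [hray_x]; ring
  have hslope : ∀ᶠ z in 𝓝[>] x, q < slope ψ x z :=
    (hasDerivAt_iff_tendsto_slope.1 hψ).mono_left (nhdsWithin_mono _ fun _ h => ne_of_gt h)
      |>.eventually (eventually_gt_nhds hq)
  have hnonneg : ∀ᶠ z in 𝓝[>] x, 0 ≤ H (x₀ + (z - x) • u) :=
    (hray.continuousAt.eventually (eventually_gt_nhds hray_pos)).filter_mono nhdsWithin_le_nhds
      |>.mono fun _ h => h.le
  have hu : ‖u‖ ≤ 1 := by
    rw [norm_smul, norm_inv, norm_norm]
    exact inv_mul_le_one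
  filter_upwards [hslope, hnonneg, self_mem_nhdsWithin] with z hqz hz0 (hxz : x < z)
  have hball : ‖x₀ + (z - x) • u‖ ≤ z :=
    calc ‖x₀ + (z - x) • u‖ ≤ ‖x₀‖ + (z - x) * ‖u‖ := by
          simpa [norm_smul, abs_of_pos (sub_pos.2 hxz)] using norm_add_le x₀ ((z - x) • u)
      _ ≤ x + (z - x) * 1 := by gcongr
      _ = z := by ring
  have hψz : ψ z ≤ mH H z ^ p := Real.rpow_le_rpow hz0 (le_mH hc hball) hp
  refine hqz.trans_le ?_
  rw [slope_def_field, slope_def_field]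
  gcongr
  simp only [ψ, hray_x, le_refl]

theorem mul_sub_le_rpow_mH_sub (hd : Differentiable ℝ H) {R A₀ α s r : ℝ} (hα : α < 1)
    (hgrad : ∀ x ∈ closedBall (0 : E2) R, A₀ * |H x| ^ α ≤ ‖gradient H x‖)
    (hs : 0 ≤ s) (hsr : s ≤ r) (hrR : r ≤ R) (hpos : ∀ t ∈ Ico s r, 0 < mH H t) :
    (1 - α) * A₀ * (r - s) ≤ mH H r ^ (1 - α) - mH H s ^ (1 - α) := by
  have hc := hd.continuous
  refine sub_le_of_forall_eventually_lt_slope hsr (((continuousOn_mH hc).mono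
    fun t ht => hs.trans ht.1).rpow_const fun _ _ => Or.inr (by linarith)) fun x hx q hq => ?_
  have hM := hpos x hx
  obtain ⟨x₀, hx₀, hmax⟩ := exists_eq_mH hc (hs.trans hx.1)
  rw [mem_closedBall_zero_iff] at hx₀
  refine eventually_lt_slope_rpow_mH hc hx₀ hmax hM (hd x₀) (by linarith) (hq.trans_le ?_)
  have hg : A₀ * mH H x ^ α ≤ ‖gradient H x₀‖ := by
    simpa [hmax, abs_of_pos hM] using hgrad x₀ (mem_closedBall_zero_iff.2 (by linarith [hx.2]))
  rw [show 1 - α - 1 = -α by ring, mul_assoc]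
  gcongr
  rw [Real.rpow_neg hM.le, inv_mul_eq_div, le_div_iff₀ (Real.rpow_pos_of_pos hM α)]
  exact hg

end MaxOnBall

theorem mH_growth_general
    (H : E2 → ℝ) (hH : ContDiff ℝ 2 H)
    (R A₀ α : ℝ) (hA₀ : 0 < A₀) (hα1 : α < 1)
    (hgrad : ∀ x ∈ closedBall (0 : E2) R, A₀ * |H x| ^ α ≤ ‖gradient H x‖)
    (hpos : ∀ s ∈ Ioo 0 R, ∃ x : E2, ‖x‖ ≤ s ∧ 0 < H x) :
    StrictMonoOn (mH H) (Ioo 0 R) ∧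
    (∀ s r : ℝ, 0 < s → s < r → r < R →
      (1 - α) * A₀ * (r - s) ≤ mH H r ^ (1 - α) - mH H s ^ (1 - α)) ∧
    (∀ r ∈ Ioo 0 R, ((1 - α) * A₀) ^ (1 / (1 - α)) * r ^ (1 / (1 - α)) ≤ mH H r) := by
  have hd : Differentiable ℝ H := hH.differentiable (by norm_num)
  have hMpos : ∀ t ∈ Ioo 0 R, 0 < mH H t := fun t ht =>
    let ⟨_, hx, hHx⟩ := hpos t ht
    hHx.trans_le (le_mH hd.continuous hx)
  have key : ∀ s r : ℝ, 0 < s → s < r → r < R →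
      (1 - α) * A₀ * (r - s) ≤ mH H r ^ (1 - α) - mH H s ^ (1 - α) := fun s r hs hsr hrR =>
    mul_sub_le_rpow_mH_sub hd hα1 hgrad hs.le hsr.le hrR.le
      fun t ht => hMpos t ⟨hs.trans_le ht.1, ht.2.trans hrR⟩
  have hc : 0 < (1 - α) * A₀ := mul_pos (by linarith) hA₀
  refine ⟨fun s hs r hr hsr => ?_, key, fun r hr => ?_⟩
  · have := key s r hs.1 hsr hr.2
    exact (Real.rpow_lt_rpow_iff (z := 1 - α) (hMpos s hs).le (hMpos r hr).le (by linarith)).1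
      (by linarith [mul_pos hc (sub_pos.2 hsr)])
  · have hlin : 0 ∈ {s : ℝ | (1 - α) * A₀ * (r - s) ≤ mH H r ^ (1 - α)} := by
      refine (isClosed_le (by fun_prop) continuous_const).closure_subset_iff.2 (fun s hs => ?_)
        (by rw [closure_Ioo hr.1.ne]; exact left_mem_Icc.2 hr.1.le)
      change (1 - α) * A₀ * (r - s) ≤ _
      have := Real.rpow_nonneg (hMpos s ⟨hs.1, hs.2.trans hr.2⟩).le (1 - α)
      linarith [key s r hs.1 hs.2 hr.2]
    rw [← Real.mul_rpow hc.le hr.1.le, one_div,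
      Real.rpow_inv_le_iff_of_pos (mul_pos hc hr.1).le (hMpos r hr).le (by linarith)]
    simpa using hlin

/-- If `|DH| ≥ A₀ |H|^α` on `cl B_R(0)` with `α ∈ (0,1)` and `H`
takes positive values arbitrarily close to `0`, then `m_H` is increasing on `(0,R)`,
satisfies `m_H(r)^{1−α} − m_H(s)^{1−α} ≥ (1−α) A₀ (r−s)` for `0 < s < r < R`, and
consequently `m_H(r) ≥ A₃ r^ρ` with `ρ = 1/(1−α)` and `A₃ = ((1−α)A₀)^{1/(1−α)}`. -/
theorem mH_growth
    (H : E2 → ℝ) (hH : ContDiff ℝ 2 H) (hH0 : H 0 = 0)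
    (R A₀ α : ℝ) (hR : 0 < R) (hA₀ : 0 < A₀) (hα0 : 0 < α) (hα1 : α < 1)
    (hgrad : ∀ x ∈ closedBall (0 : E2) R, A₀ * |H x| ^ α ≤ ‖gradient H x‖)
    (hpos : ∀ s ∈ Ioo 0 R, ∃ x : E2, ‖x‖ ≤ s ∧ 0 < H x) :
    StrictMonoOn (mH H) (Ioo 0 R) ∧
    (∀ s r : ℝ, 0 < s → s < r → r < R →
      (1 - α) * A₀ * (r - s) ≤ mH H r ^ (1 - α) - mH H s ^ (1 - α)) ∧
    (∀ r ∈ Ioo 0 R, ((1 - α) * A₀) ^ (1 / (1 - α)) * r ^ (1 / (1 - α)) ≤ mH H r) :=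
  mH_growth_general H hH R A₀ α hA₀ hα1 hgrad hpos
end
end

section
/- Let h₀ > 0, J = (0, h₀), λ > 0 and M ≥ 0. Let Ḡ : (0, h₀] × ℝ → ℝ be continuous, and suppose there is a positive continuous function ψ on (0, h₀] with ∫₀^{h₀} ψ(h) dh < ∞ such that Ḡ(h, q) ≥ |q|/ψ(h) − M for all h ∈ (0, h₀] and q ∈ ℝ. Let F be a family of continuous functions on [0, h₀] each of whose members restricts on J to a viscosity subsolution of λv + Ḡ(h, v′) = 0 in J. If F is uniformly bounded on [0, h₀], then F is equi-continuous on [0, h₀]. -/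
open Filter Topology Set Metric MeasureTheory

noncomputable section

/-!
Coercivity turns the subsolution inequality into the viscosity inequality `|v'| ≤ K ψ`, with
`K = M + λ C` for a uniform bound `C` of the family. Such a `v` admits no interior maximum of
`v - φ` when `|φ'| > K ψ`; testing against `K ∫ ψ + η t` plus a smooth barrier that vanishes up
to `x` and rises steeply afterwards (and against its mirror image) gives
`|v x - v y| ≤ K |Φ x - Φ y|` for a primitive `Φ` of `ψ`, first on `(0, h₀)` and then, by
continuity, on `[0, h₀]`. As `ψ` is integrable, `Φ` is continuous on `[0, h₀]`, so this common
modulus yields equicontinuity.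
-/

theorem ContinuousOn.exists_contDiff_hasDerivAt {g : ℝ → ℝ} {a b : ℝ} (hab : a ≤ b)
    (hg : ContinuousOn g (Icc a b)) :
    ∃ G : ℝ → ℝ, ContDiff ℝ 1 G ∧ ∀ t ∈ Icc a b, HasDerivAt G (g t) t := by
  set ĝ := IccExtend hab ((Icc a b).domRestrict g)
  have hĝ : Continuous ĝ := hg.domRestrict.Icc_extend'
  have hG : ∀ t, HasDerivAt (fun t => ∫ s in a..t, ĝ s) (ĝ t) t := fun t =>
    (hĝ.integral_hasStrictDerivAt a t).hasDerivAt
  refine ⟨fun t => ∫ s in a..t, ĝ s, contDiff_one_iff_deriv.2 ⟨fun t => (hG t).differentiableAt,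
    ?_⟩, fun t ht => by simpa [ĝ, IccExtend_of_mem hab _ ht] using hG t⟩
  rwa [funext fun t => (hG t).deriv]

theorem ContinuousOn.dist_fst_snd {X α : Type*} [TopologicalSpace X] [PseudoMetricSpace α]
    {s : Set X} {w : X → α} (hw : ContinuousOn w s) :
    ContinuousOn (fun p : X × X => dist (w p.1) (w p.2)) (s ×ˢ s) :=
  continuous_dist.comp_continuousOn <|
    (hw.comp continuousOn_fst fun _ hp => (mem_prod.1 hp).1).prodMk
      (hw.comp continuousOn_snd fun _ hp => (mem_prod.1 hp).2)

theorem forall_mem_closure_dist_le_mul_dist {X α β : Type*} [TopologicalSpace X]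
    [PseudoMetricSpace α] [PseudoMetricSpace β] {s : Set X} {u : X → α} {Φ : X → β} {K : ℝ}
    (hu : ContinuousOn u (closure s)) (hΦ : ContinuousOn Φ (closure s))
    (h : ∀ x ∈ s, ∀ y ∈ s, dist (u x) (u y) ≤ K * dist (Φ x) (Φ y)) :
    ∀ x ∈ closure s, ∀ y ∈ closure s, dist (u x) (u y) ≤ K * dist (Φ x) (Φ y) := by
  intro x hx y hy
  have hcl := le_on_closure (s := s ×ˢ s) (fun p hp => h p.1 hp.1 p.2 hp.2)
  rw [closure_prod_eq] at hcl
  exact hcl hu.dist_fst_snd (hΦ.dist_fst_snd.const_smul K) (x := (x, y)) ⟨hx, hy⟩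

theorem equicontinuousOn_of_dist_le_mul_dist {ι X α β : Type*} [TopologicalSpace X]
    [PseudoMetricSpace α] [PseudoMetricSpace β] {F : ι → X → α} {S : Set X} {Φ : X → β} {K : ℝ}
    (hΦ : ContinuousOn Φ S)
    (h : ∀ i, ∀ x ∈ S, ∀ y ∈ S, dist (F i x) (F i y) ≤ K * dist (Φ x) (Φ y)) :
    EquicontinuousOn F S := by
  rw [← equicontinuous_restrict_iff]
  intro x₀
  have hcont : Continuous fun x : S => K * dist (Φ x₀) (Φ x) :=
    continuous_const.mul (continuous_const.dist hΦ.domRestrict)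
  exact Metric.equicontinuousAt_of_continuity_modulus _ (by simpa using hcont.tendsto x₀) _
    (Eventually.of_forall fun x i => h i x₀ x₀.2 x x.2)

def ViscosityAbsDerivLE (U : Set ℝ) (g v : ℝ → ℝ) : Prop :=
  ∀ φ : ℝ → ℝ, ContDiff ℝ 1 φ → ∀ z ∈ U,
    IsLocalMaxOn (fun t => v t - φ t) U z → |deriv φ z| ≤ g z

namespace ViscosityAbsDerivLE

variable {U : Set ℝ} {g v : ℝ → ℝ}

theorem of_coercive {lam M C : ℝ} {G : ℝ → ℝ → ℝ} {ψ : ℝ → ℝ} (hlam : 0 ≤ lam)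
    (hψ : ∀ h ∈ U, 0 < ψ h) (hcoer : ∀ h ∈ U, ∀ q : ℝ, |q| / ψ h - M ≤ G h q)
    (hvC : ∀ h ∈ U, -C ≤ v h)
    (hsub : ∀ φ : ℝ → ℝ, ContDiff ℝ 1 φ → ∀ z ∈ U,
      IsLocalMaxOn (fun h => v h - φ h) U z → lam * v z + G z (deriv φ z) ≤ 0) :
    ViscosityAbsDerivLE U (fun h => (M + lam * C) * ψ h) v := by
  intro φ hφ z hz hmax
  have hG := hsub φ hφ z hz hmax
  have hq := hcoer z hz (deriv φ z)
  have hlamv : lam * -C ≤ lam * v z := mul_le_mul_of_nonneg_left (hvC z hz) hlam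
  rw [← div_le_iff₀ (hψ z hz)]
  linarith

theorem comp_neg (hv : ViscosityAbsDerivLE U g v) :
    ViscosityAbsDerivLE (Neg.neg ⁻¹' U) (fun t => g (-t)) (fun t => v (-t)) := by
  intro φ hφ z hz hmax
  have hmax' : IsLocalMaxOn (fun t => v t - φ (-t)) U (-z) := by
    rw [← neg_neg z] at hmax
    simpa [Function.comp_def] using
      hmax.comp_continuousOn (fun t (ht : t ∈ U) => show -(-t) ∈ U by rwa [neg_neg])
        continuous_neg.continuousOn hz
  have := hv (fun t => φ (-t)) (hφ.comp contDiff_neg) (-z) hz hmax'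
  rwa [deriv_comp_neg, neg_neg, abs_neg] at this

theorem le_max_of_lt_abs_deriv (hv : ViscosityAbsDerivLE U g v) {l r : ℝ} (hlr : l ≤ r)
    (hU : Ioo l r ⊆ U) (hvc : ContinuousOn v (Icc l r)) {φ : ℝ → ℝ} (hφ : ContDiff ℝ 1 φ)
    (hsteep : ∀ z ∈ Ioo l r, g z < |deriv φ z|) :
    ∀ t ∈ Icc l r, v t - φ t ≤ max (v l - φ l) (v r - φ r) := by
  obtain ⟨z, hz, hzmax⟩ := isCompact_Icc.exists_isMaxOn (nonempty_Icc.2 hlr)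
    (hvc.sub hφ.continuous.continuousOn)
  intro t ht
  refine (hzmax ht).trans ?_
  rcases eq_endpoints_or_mem_Ioo_of_mem_Icc hz with rfl | rfl | hz'
  · exact le_max_left _ _
  · exact le_max_right _ _
  · have hloc : IsLocalMaxOn (fun t => v t - φ t) U z :=
      ((hzmax.on_subset Ioo_subset_Icc_self).isLocalMax (Ioo_mem_nhds hz'.1 hz'.2)).on U
    exact absurd (hv φ hφ z (hU hz') hloc) (not_le.2 (hsteep z hz'))

theorem sub_le_sub_of_le_deriv (hv : ViscosityAbsDerivLE U g v) {y x b : ℝ} (hyx : y ≤ x)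
    (hxb : x < b) (hU : Ioo y b ⊆ U) (hvc : ContinuousOn v (Icc y b)) {G : ℝ → ℝ}
    (hG : ContDiff ℝ 1 G) (hGg : ∀ z ∈ Ioo y b, g z ≤ deriv G z) :
    v x - v y ≤ G x - G y := by
  refine le_of_forall_pos_le_add fun ε hε => ?_
  set η := ε / (b - y)
  have hη : 0 < η := div_pos hε (by linarith)
  -- `B` vanishes up to `x` and lifts `φ b` so high that `v - φ` cannot peak at `b`.
  set B : ℝ → ℝ := fun t =>
    (|v b - v x| + |G b - G x|) * Real.smoothTransition ((t - x) / (b - x))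
  have hB : ContDiff ℝ 1 B := contDiff_const.mul
    (Real.smoothTransition.contDiff.comp ((contDiff_id.sub contDiff_const).div_const _))
  have hBmono : Monotone B := fun s t hst => mul_le_mul_of_nonneg_left
    (Real.smoothTransition.monotone (div_le_div_of_nonneg_right (by linarith) (by linarith)))
    (by positivity)
  have hBx : ∀ t ≤ x, B t = 0 := fun t ht => by
    simp only [B, Real.smoothTransition.zero_of_nonpos (div_nonpos_of_nonpos_of_nonneg
      (sub_nonpos.2 ht) (sub_pos.2 hxb).le), mul_zero]
  have hBb : B b = |v b - v x| + |G b - G x| := by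
    simp only [B, div_self (sub_pos.2 hxb).ne', Real.smoothTransition.one, mul_one]
  set φ : ℝ → ℝ := fun t => G t + η * t + B t
  have hφ : ContDiff ℝ 1 φ := (hG.add (contDiff_const.mul contDiff_id)).add hB
  have hsteep : ∀ z ∈ Ioo y b, g z < |deriv φ z| := by
    intro z hz
    have hderiv : deriv φ z = deriv G z + η + deriv B z := by
      have hφ' : HasDerivAt φ (deriv G z + η * 1 + deriv B z) z :=
        (((hG.differentiable one_ne_zero z).hasDerivAt.add
          ((hasDerivAt_id' z).const_mul η)).add (hB.differentiable one_ne_zero z).hasDerivAt)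
      rw [hφ'.deriv, mul_one]
    have hB' : 0 ≤ deriv B z := hBmono.deriv_nonneg
    have hG' := hGg z hz
    rw [hderiv]
    exact lt_of_lt_of_le (by linarith) (le_abs_self _)
  have hpeak := hv.le_max_of_lt_abs_deriv (hyx.trans hxb.le) hU hvc hφ hsteep x ⟨hyx, hxb.le⟩
  have hb : v b - φ b < v x - φ x := by
    simp only [φ, hBb, hBx x le_rfl]
    have : 0 < η * (b - x) := mul_pos hη (by linarith)
    linarith [le_abs_self (v b - v x), neg_abs_le (G b - G x)]
  have hy : v x - φ x ≤ v y - φ y := by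
    rcases le_max_iff.1 hpeak with h | h
    · exact h
    · linarith
  have hηε : η * (x - y) ≤ ε := by
    calc η * (x - y) ≤ η * (b - y) := mul_le_mul_of_nonneg_left (by linarith) hη.le
      _ = ε := div_mul_cancel₀ _ (by linarith)
  simp only [φ, hBx x le_rfl, hBx y hyx] at hy
  linarith

theorem sub_le_sub_of_le_deriv' (hv : ViscosityAbsDerivLE U g v) {l y x : ℝ} (hly : l < y)
    (hyx : y ≤ x) (hU : Ioo l x ⊆ U) (hvc : ContinuousOn v (Icc l x)) {G : ℝ → ℝ}
    (hG : ContDiff ℝ 1 G) (hGg : ∀ z ∈ Ioo l x, g z ≤ deriv G z) :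
    v y - v x ≤ G x - G y := by
  have h := hv.comp_neg.sub_le_sub_of_le_deriv (neg_le_neg hyx) (neg_lt_neg hly)
    (fun t ht => hU ⟨lt_neg.1 ht.2, neg_lt.1 ht.1⟩)
    (hvc.comp continuousOn_neg fun t ht => ⟨le_neg.1 ht.2, neg_le.1 ht.1⟩)
    (G := fun t => -G (-t)) (hG.comp contDiff_neg).neg fun z hz => by
      rw [deriv.fun_neg, deriv_comp_neg, neg_neg]
      exact hGg (-z) ⟨lt_neg.1 hz.2, neg_lt.1 hz.1⟩
  simp only [neg_neg] at h
  linarith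

theorem abs_sub_le_of_le_deriv (hv : ViscosityAbsDerivLE U g v) {l y x b : ℝ} (hly : l < y)
    (hyx : y ≤ x) (hxb : x < b) (hU : Ioo l b ⊆ U) (hvc : ContinuousOn v (Icc l b))
    {G : ℝ → ℝ} (hG : ContDiff ℝ 1 G) (hGg : ∀ z ∈ Ioo l b, g z ≤ deriv G z) :
    |v x - v y| ≤ G x - G y :=
  abs_sub_le_iff.2
    ⟨hv.sub_le_sub_of_le_deriv hyx hxb (fun _ hz => hU ⟨hly.trans hz.1, hz.2⟩)
      (hvc.mono (Icc_subset_Icc_left hly.le)) hG fun z hz => hGg z ⟨hly.trans hz.1, hz.2⟩,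
    hv.sub_le_sub_of_le_deriv' hly hyx (fun _ hz => hU ⟨hz.1, hz.2.trans hxb⟩)
      (hvc.mono (Icc_subset_Icc_right hxb.le)) hG fun z hz => hGg z ⟨hz.1, hz.2.trans hxb⟩⟩

theorem dist_le_abs_integral {a b : ℝ} (hv : ViscosityAbsDerivLE (Ioo a b) g v)
    (hvc : ContinuousOn v (Ioo a b)) (hg : ContinuousOn g (Ioo a b)) {x y : ℝ}
    (hx : x ∈ Ioo a b) (hy : y ∈ Ioo a b) : dist (v x) (v y) ≤ |∫ t in y..x, g t| := by
  wlog hyx : y ≤ x generalizing x y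
  · rw [dist_comm, intervalIntegral.integral_symm, abs_neg]
    exact this hy hx (le_of_not_ge hyx)
  obtain ⟨l, hal, hly⟩ := exists_between hy.1
  obtain ⟨r, hxr, hrb⟩ := exists_between hx.2
  have hlr : Icc l r ⊆ Ioo a b := Icc_subset_Ioo hal hrb
  obtain ⟨G, hG, hGg⟩ :=
    (hg.mono hlr).exists_contDiff_hasDerivAt (hly.le.trans (hyx.trans hxr.le))
  have hint : ∫ t in y..x, g t = G x - G y := by
    have hyxlr : uIcc y x ⊆ Icc l r := uIcc_of_le hyx ▸ Icc_subset_Icc hly.le hxr.le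
    exact intervalIntegral.integral_eq_sub_of_hasDerivAt (fun t ht => hGg t (hyxlr ht))
      ((hg.mono (hyxlr.trans hlr)).intervalIntegrable)
  rw [Real.dist_eq, hint]
  refine (hv.abs_sub_le_of_le_deriv hly hyx hxr (Ioo_subset_Icc_self.trans hlr)
    (hvc.mono hlr) hG fun z hz => (hGg z (Ioo_subset_Icc_self hz)).deriv.ge).trans (le_abs_self _)

end ViscosityAbsDerivLE

theorem subsolutions_equicontinuous_general
    (h₀ lam M : ℝ) (hh₀ : 0 < h₀) (hlam : 0 < lam)
    (Gb : ℝ → ℝ → ℝ)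
    (ψ : ℝ → ℝ) (hψc : ContinuousOn ψ (Ioc 0 h₀)) (hψpos : ∀ h ∈ Ioc 0 h₀, 0 < ψ h)
    (hψint : IntegrableOn ψ (Ioo 0 h₀))
    (hcoer : ∀ h ∈ Ioc 0 h₀, ∀ q : ℝ, |q| / ψ h - M ≤ Gb h q)
    (F : Set (ℝ → ℝ))
    (hFc : ∀ v ∈ F, ContinuousOn v (Icc 0 h₀))
    (hFsub : ∀ v ∈ F, ∀ φ : ℝ → ℝ, ContDiff ℝ 1 φ → ∀ z ∈ Ioo 0 h₀,
      IsLocalMaxOn (fun h => v h - φ h) (Ioo 0 h₀) z →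
      lam * v z + Gb z (deriv φ z) ≤ 0)
    (hFbdd : ∃ C : ℝ, ∀ v ∈ F, ∀ h ∈ Icc 0 h₀, |v h| ≤ C) :
    EquicontinuousOn (fun v : F => (v : ℝ → ℝ)) (Icc 0 h₀) := by
  obtain ⟨C, hC⟩ := hFbdd
  have hψi : IntegrableOn ψ (uIcc 0 h₀) := by
    rwa [uIcc_of_le hh₀.le, integrableOn_Icc_iff_integrableOn_Ioo]
  set Φ : ℝ → ℝ := fun t => ∫ s in (0 : ℝ)..t, ψ s
  have hΦc : ContinuousOn Φ (Icc 0 h₀) :=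
    uIcc_of_le hh₀.le ▸ intervalIntegral.continuousOn_primitive_interval hψi
  have hΦ : ∀ x ∈ Icc 0 h₀, ∀ y ∈ Icc 0 h₀, ∫ t in y..x, ψ t = Φ x - Φ y := fun x hx y hy =>
    (intervalIntegral.integral_interval_sub_left
      (hψi.mono_set (uIcc_subset_uIcc_left (uIcc_of_le hh₀.le ▸ hx))).intervalIntegrable
      (hψi.mono_set (uIcc_subset_uIcc_left (uIcc_of_le hh₀.le ▸ hy))).intervalIntegrable).symm
  refine equicontinuousOn_of_dist_le_mul_dist hΦc (K := |M + lam * C|) fun ⟨v, hvF⟩ => ?_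
  have hsub : ViscosityAbsDerivLE (Ioo 0 h₀) (fun h => (M + lam * C) * ψ h) v :=
    .of_coercive hlam.le (fun h hh => hψpos h (Ioo_subset_Ioc_self hh))
      (fun h hh => hcoer h (Ioo_subset_Ioc_self hh))
      (fun h hh => neg_le_of_abs_le (hC v hvF h (Ioo_subset_Icc_self hh))) (hFsub v hvF)
  have hvc := hFc v hvF
  rw [← closure_Ioo hh₀.ne] at hvc hΦc hΦ ⊢
  refine forall_mem_closure_dist_le_mul_dist hvc hΦc ?_
  intro x hx y hy
  calc dist (v x) (v y) ≤ |∫ t in y..x, (M + lam * C) * ψ t| :=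
        hsub.dist_le_abs_integral (hvc.mono subset_closure)
          (continuousOn_const.mul (hψc.mono Ioo_subset_Ioc_self)) hx hy
    _ = |M + lam * C| * dist (Φ x) (Φ y) := by
      rw [intervalIntegral.integral_const_mul, abs_mul,
        hΦ x (subset_closure hx) y (subset_closure hy), Real.dist_eq]

/-- Under an integrable coercivity bound `Ḡ(h,q) ≥ |q|/ψ(h) − M`,
any uniformly bounded family of continuous functions on `[0, h₀]` that are viscosity
subsolutions of `λ v + Ḡ(h, v′) = 0` in `(0, h₀)` is equi-continuous on `[0, h₀]`. -/
theorem subsolutions_equicontinuous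
    (h₀ lam M : ℝ) (hh₀ : 0 < h₀) (hlam : 0 < lam) (hM : 0 ≤ M)
    (Gb : ℝ → ℝ → ℝ)
    (hGb : ContinuousOn (fun p : ℝ × ℝ => Gb p.1 p.2) (Ioc 0 h₀ ×ˢ (univ : Set ℝ)))
    (ψ : ℝ → ℝ) (hψc : ContinuousOn ψ (Ioc 0 h₀)) (hψpos : ∀ h ∈ Ioc 0 h₀, 0 < ψ h)
    (hψint : IntegrableOn ψ (Ioo 0 h₀))
    (hcoer : ∀ h ∈ Ioc 0 h₀, ∀ q : ℝ, |q| / ψ h - M ≤ Gb h q)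
    (F : Set (ℝ → ℝ))
    (hFc : ∀ v ∈ F, ContinuousOn v (Icc 0 h₀))
    (hFsub : ∀ v ∈ F, ∀ φ : ℝ → ℝ, ContDiff ℝ 1 φ → ∀ z ∈ Ioo 0 h₀,
      IsLocalMaxOn (fun h => v h - φ h) (Ioo 0 h₀) z →
      lam * v z + Gb z (deriv φ z) ≤ 0)
    (hFbdd : ∃ C : ℝ, ∀ v ∈ F, ∀ h ∈ Icc 0 h₀, |v h| ≤ C) :
    EquicontinuousOn (fun v : F => (v : ℝ → ℝ)) (Icc 0 h₀) :=
  subsolutions_equicontinuous_general h₀ lam M hh₀ hlam Gb ψ hψc hψpos hψint hcoer F hFc hFsub hFbdd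
end
end

section
/- Let h₀ > 0, λ > 0 and g₀ ∈ ℝ. Let Ḡ : (0, h₀] × ℝ → ℝ be continuous and locally coercive, in the sense that for every closed interval I ⊂ (0, h₀], lim_{r→∞} inf{Ḡ(h, q) : h ∈ I, |q| ≥ r} = ∞. Let v : (0, h₀] → ℝ be continuous, a viscosity subsolution of λv + Ḡ(h, v′) = 0 in (0, h₀), and a viscosity subsolution of the boundary condition at h₀: for every C¹ function φ on (0, h₀] such that v − φ attains a local maximum (relative to (0, h₀]) at h₀, min{λv(h₀) + Ḡ(h₀, φ′(h₀)), v(h₀) − g₀} ≤ 0. Then v(h₀) ≤ g₀. -/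
open Filter Topology Set Metric

noncomputable section

/-- If `Ḡ` is locally coercive on `(0, h₀]`, then every continuous
viscosity subsolution of `λ v + Ḡ(h, v′) = 0` in `(0, h₀)` satisfying the Dirichlet
condition `v(h₀) = g₀` in the viscosity sense satisfies it classically:
`v(h₀) ≤ g₀`. -/
theorem boundary_inequality_for_subsolutions
    (h₀ lam g₀ : ℝ) (hh₀ : 0 < h₀) (hlam : 0 < lam)
    (Gb : ℝ → ℝ → ℝ)
    (hGb : ContinuousOn (fun p : ℝ × ℝ => Gb p.1 p.2) (Ioc 0 h₀ ×ˢ (univ : Set ℝ)))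
    (hcoer : ∀ a b : ℝ, 0 < a → a ≤ b → b ≤ h₀ → ∀ C : ℝ, ∃ r : ℝ,
      ∀ h ∈ Icc a b, ∀ q : ℝ, r ≤ |q| → C ≤ Gb h q)
    (v : ℝ → ℝ) (hv : ContinuousOn v (Ioc 0 h₀))
    (hsub : ∀ φ : ℝ → ℝ, ContDiff ℝ 1 φ → ∀ z ∈ Ioo 0 h₀,
      IsLocalMaxOn (fun h => v h - φ h) (Ioo 0 h₀) z →
      lam * v z + Gb z (deriv φ z) ≤ 0)
    (hbc : ∀ φ : ℝ → ℝ, ContDiff ℝ 1 φ →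
      IsLocalMaxOn (fun h => v h - φ h) (Ioc 0 h₀) h₀ →
      min (lam * v h₀ + Gb h₀ (deriv φ h₀)) (v h₀ - g₀) ≤ 0) :
    v h₀ ≤ g₀ := by
  -- Work on the compact interval [a, h₀] with a = h₀/2.
  set a : ℝ := h₀ / 2 with ha_def
  have ha0 : 0 < a := by positivity
  have hah : a < h₀ := by
    rw [ha_def]; linarith
  have hIcc_sub : Icc a h₀ ⊆ Ioc 0 h₀ := fun x hx => ⟨lt_of_lt_of_le ha0 hx.1, hx.2⟩
  have hvI : ContinuousOn v (Icc a h₀) := hv.mono hIcc_sub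
  -- Bound for v on [a, h₀].
  obtain ⟨M, hM⟩ := isCompact_Icc.exists_bound_of_continuousOn hvI
  have hM0 : 0 ≤ M := le_trans (norm_nonneg _) (hM h₀ ⟨hah.le, le_rfl⟩)
  have hMabs : ∀ x ∈ Icc a h₀, |v x| ≤ M := by
    intro x hx; simpa [Real.norm_eq_abs] using hM x hx
  -- Coercivity constant.
  obtain ⟨r, hr⟩ := hcoer a h₀ ha0 hah.le le_rfl (lam * M + 1)
  -- Choose a large slope K.
  set K : ℝ := max (max r 0) (2 * M / (h₀ - a) + 1) with hK_def
  have hK0 : 0 ≤ K := le_trans (le_max_right r 0) (le_max_left _ _)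
  have hKr : r ≤ K := le_trans (le_max_left r 0) (le_max_left _ _)
  have hK2M : 2 * M / (h₀ - a) + 1 ≤ K := le_max_right _ _
  -- Coercivity applied at slope -K.
  have hGbig : ∀ h ∈ Icc a h₀, lam * M + 1 ≤ Gb h (-K) := by
    intro h hh
    refine hr h hh (-K) ?_
    rw [abs_neg, abs_of_nonneg hK0]; exact hKr
  -- The test function.
  set φ : ℝ → ℝ := fun h => K * (h₀ - h) with hφ_def
  have hφC : ContDiff ℝ 1 φ := contDiff_const.mul (contDiff_const.sub contDiff_id)
  have hφderiv : ∀ z : ℝ, deriv φ z = -K := by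
    intro z
    have h1 : HasDerivAt φ (K * (-1)) z :=
      ((hasDerivAt_id z).const_sub h₀).const_mul K
    rw [h1.deriv]; ring
  -- Maximize v - φ on [a, h₀].
  have hψcont : ContinuousOn (fun h => v h - φ h) (Icc a h₀) :=
    hvI.sub (hφC.continuous.continuousOn)
  obtain ⟨z, hz, hmax⟩ := isCompact_Icc.exists_isMaxOn (nonempty_Icc.mpr hah.le) hψcont
  rcases eq_or_lt_of_le hz.2 with hzeq | hzlt
  · -- z = h₀ : boundary case.
    subst hzeq
    have hloc : IsLocalMaxOn (fun h => v h - φ h) (Ioc 0 z) z := by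
      have hmem : Ioi a ∈ 𝓝[Ioc 0 z] z := nhdsWithin_le_nhds (Ioi_mem_nhds hah)
      filter_upwards [hmem, self_mem_nhdsWithin] with x hx1 hx2
      exact hmax ⟨le_of_lt hx1, hx2.2⟩
    have hmin := hbc φ hφC hloc
    have h1 : lam * M + 1 ≤ Gb z (-K) := hGbig z ⟨hah.le, le_rfl⟩
    have h2 : |v z| ≤ M := hMabs z ⟨hah.le, le_rfl⟩
    have h3 : -M ≤ v z := neg_le_of_abs_le h2
    have hpos : 0 < lam * v z + Gb z (deriv φ z) := by
      rw [hφderiv z]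
      nlinarith [hlam.le]
    rcases min_le_iff.mp hmin with hc | hc
    · linarith
    · linarith
  · rcases eq_or_lt_of_le hz.1 with hzeq | hzlt'
    · -- z = a : impossible since K is large.
      exfalso
      have h1 : v h₀ - φ h₀ ≤ v z - φ z := hmax ⟨hah.le, le_rfl⟩
      have hφz : φ z = K * (h₀ - a) := by rw [hφ_def, ← hzeq]
      have hφh₀ : φ h₀ = 0 := by simp [hφ_def]
      have h2 : |v z| ≤ M := hMabs z hz
      have h3 : |v h₀| ≤ M := hMabs h₀ ⟨hah.le, le_rfl⟩
      have hdpos : 0 < h₀ - a := sub_pos.mpr hah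
      have hKlb : 2 * M / (h₀ - a) * (h₀ - a) = 2 * M := div_mul_cancel₀ _ hdpos.ne'
      have habs2 : -M ≤ v h₀ := neg_le_of_abs_le h3
      have habs1 : v z ≤ M := le_of_abs_le h2
      -- from h1 : v h₀ ≤ v z - K*(h₀ - a)
      have hKle : K * (h₀ - a) ≤ 2 * M := by
        rw [hφz, hφh₀] at h1; linarith
      nlinarith [hK2M, hdpos]
    · -- a < z < h₀ : interior case, contradiction with coercivity.
      exfalso
      have hzIoo : z ∈ Ioo 0 h₀ := ⟨lt_trans ha0 hzlt', hzlt⟩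
      have hloc : IsLocalMaxOn (fun h => v h - φ h) (Ioo 0 h₀) z := by
        have hmem : Ioo a h₀ ∈ 𝓝[Ioo 0 h₀] z :=
          nhdsWithin_le_nhds (isOpen_Ioo.mem_nhds ⟨hzlt', hzlt⟩)
        filter_upwards [hmem] with x hx
        exact hmax ⟨hx.1.le, hx.2.le⟩
      have hle := hsub φ hφC z hzIoo hloc
      rw [hφderiv z] at hle
      have h1 : lam * M + 1 ≤ Gb z (-K) := hGbig z hz
      have h2 : -M ≤ v z := neg_le_of_abs_le (hMabs z hz)
      nlinarith [hlam.le]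
end
end
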